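/- arXiv:2601.19615 — 10 statements merged into one kernel-verified Lean document; each statement's English description precedes it below -/
import Mathlib

section
/- Let x ∈ X_SE be a supported efficient solution. Then the weight set component of x is exactly the closed interval Λ(x) = [λ(α^x), λ(α_x)]; that is, for every λ ∈ [0,1], x ∈ X_λ if and only if λ(α^x) ≤ λ ≤ λ(α_x). -/
open Set

noncomputable section

/-- The weighted-sum objective `λ·f₁ + (1−λ)·f₂`. -/
def wsum {X : Type*} (f₁ f₂ : X → ℝ) (lam : ℝ) (x : X) : ℝ :=
  lam * f₁ x + (1 - lam) * f₂ x

/-- `XlamSet f₁ f₂ λ` is the set `X_λ` of minimizers of the weighted-sum scalarisation. -/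
def XlamSet {X : Type*} (f₁ f₂ : X → ℝ) (lam : ℝ) : Set X :=
  {x | ∀ x' : X, wsum f₁ f₂ lam x ≤ wsum f₁ f₂ lam x'}

/-- `x` is supported efficient if it is optimal for some `λ ∈ (0,1)`. -/
def SuppEff {X : Type*} (f₁ f₂ : X → ℝ) (x : X) : Prop :=
  ∃ lam ∈ Set.Ioo (0 : ℝ) 1, x ∈ XlamSet f₁ f₂ lam

/-- The objSlope `s(x',x)` between the images of `x'` and `x`. -/
def objSlope {X : Type*} (f₁ f₂ : X → ℝ) (x' x : X) : ℝ :=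
  (f₂ x' - f₂ x) / (f₁ x' - f₁ x)

/-- `X^<(x)`: the solutions with strictly smaller first objective value. -/
def Xlt {X : Type*} (f₁ : X → ℝ) (x : X) : Set X := {x' | f₁ x' < f₁ x}

/-- `X^>(x)`: the solutions with strictly larger first objective value. -/
def Xgt {X : Type*} (f₁ : X → ℝ) (x : X) : Set X := {x' | f₁ x < f₁ x'}

/-- `α_x = max({s(x',x) : x' ∈ X^<(x)} ∪ {−∞})`, as an extended real. -/
def alphaLow {X : Type*} (f₁ f₂ : X → ℝ) (x : X) : EReal :=
  sSup ((fun x' => (objSlope f₁ f₂ x' x : EReal)) '' Xlt f₁ x ∪ {⊥})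

/-- `α^x = min({s(x',x) : x' ∈ X^>(x)} ∪ {0})`, as an extended real. -/
def alphaHigh {X : Type*} (f₁ f₂ : X → ℝ) (x : X) : EReal :=
  sInf ((fun x' => (objSlope f₁ f₂ x' x : EReal)) '' Xgt f₁ x ∪ {0})

/-- `λ(α) = α/(α−1)` for real `α ≤ 0`, extended by `λ(−∞) = 1`. -/
def lamOf (a : EReal) : ℝ :=
  if a = ⊥ then 1 else a.toReal / (a.toReal - 1)

/-!
Comparing `x` with a competitor `x'` whose first objective differs, the weighted difference
`wsum λ x' - wsum λ x` factors as `(λ + (1 - λ) s) (f₁ x' - f₁ x)` with `s = s(x', x)`. So `x ∈ X_λ`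
says `λ + (1 - λ) s ≤ 0` for every slope to the left and `0 ≤ λ + (1 - λ) s` for every slope to the
right (ties in `f₁` are harmless because `x` is supported efficient). Since `s ↦ λ + (1 - λ) s` is
monotone, it suffices to test the extremal slopes `α_x` and `α^x`, and for `s < 1` the condition
`0 ≤ λ + (1 - λ) s` is exactly `λ(s) ≤ λ`.
-/

section Arithmetic

variable {s lam : ℝ}

lemma div_sub_one_le_iff (hs : s < 1) : s / (s - 1) ≤ lam ↔ 0 ≤ lam + (1 - lam) * s := by
  rw [div_le_iff_of_neg (by linarith)]
  constructor <;> intro h <;> linarith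

lemma le_div_sub_one_iff (hs : s < 1) : lam ≤ s / (s - 1) ↔ lam + (1 - lam) * s ≤ 0 := by
  rw [le_div_iff_of_neg (by linarith)]
  constructor <;> intro h <;> linarith

lemma monotone_add_one_sub_mul (hlam : lam ≤ 1) : Monotone fun s : ℝ => lam + (1 - lam) * s :=
  fun _ _ hst => by nlinarith

end Arithmetic

section WeightedSum

variable {X : Type*} (f₁ f₂ : X → ℝ) {lam : ℝ} {x x' : X}

lemma wsum_sub_wsum_of_f₁_eq (h : f₁ x' = f₁ x) :
    wsum f₁ f₂ lam x' - wsum f₁ f₂ lam x = (1 - lam) * (f₂ x' - f₂ x) := by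
  simp only [wsum, h]
  ring

lemma wsum_sub_wsum_eq_mul_objSlope (h : f₁ x' ≠ f₁ x) :
    wsum f₁ f₂ lam x' - wsum f₁ f₂ lam x =
      (lam + (1 - lam) * objSlope f₁ f₂ x' x) * (f₁ x' - f₁ x) := by
  have hd : f₁ x' - f₁ x ≠ 0 := sub_ne_zero.mpr h
  simp only [wsum, objSlope]
  field_simp
  ring

lemma wsum_le_wsum_iff_of_f₁_lt (h : f₁ x' < f₁ x) :
    wsum f₁ f₂ lam x ≤ wsum f₁ f₂ lam x' ↔ lam + (1 - lam) * objSlope f₁ f₂ x' x ≤ 0 := by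
  rw [← sub_nonneg, wsum_sub_wsum_eq_mul_objSlope f₁ f₂ h.ne, ← neg_mul_neg,
    mul_nonneg_iff_of_pos_right (by linarith), neg_nonneg]

lemma wsum_le_wsum_iff_of_f₁_gt (h : f₁ x < f₁ x') :
    wsum f₁ f₂ lam x ≤ wsum f₁ f₂ lam x' ↔ 0 ≤ lam + (1 - lam) * objSlope f₁ f₂ x' x := by
  rw [← sub_nonneg, wsum_sub_wsum_eq_mul_objSlope f₁ f₂ h.ne',
    mul_nonneg_iff_of_pos_right (by linarith)]

lemma mem_XlamSet_iff_objSlope (hlam : lam ≤ 1) (hties : ∀ x', f₁ x' = f₁ x → f₂ x ≤ f₂ x') :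
    x ∈ XlamSet f₁ f₂ lam ↔
      (∀ x' ∈ Xgt f₁ x, 0 ≤ lam + (1 - lam) * objSlope f₁ f₂ x' x) ∧
        ∀ x' ∈ Xlt f₁ x, lam + (1 - lam) * objSlope f₁ f₂ x' x ≤ 0 := by
  refine ⟨fun hx => ⟨fun x' h => (wsum_le_wsum_iff_of_f₁_gt f₁ f₂ h).mp (hx x'),
    fun x' h => (wsum_le_wsum_iff_of_f₁_lt f₁ f₂ h).mp (hx x')⟩, fun ⟨hgt, hlt⟩ x' => ?_⟩
  rcases lt_trichotomy (f₁ x') (f₁ x) with h | h | h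
  · exact (wsum_le_wsum_iff_of_f₁_lt f₁ f₂ h).mpr (hlt x' h)
  · rw [← sub_nonneg, wsum_sub_wsum_of_f₁_eq f₁ f₂ h]
    exact mul_nonneg (by linarith) (sub_nonneg.mpr (hties x' h))
  · exact (wsum_le_wsum_iff_of_f₁_gt f₁ f₂ h).mpr (hgt x' h)

namespace SuppEff

variable {f₁ f₂}

lemma f₂_le_of_f₁_eq (hx : SuppEff f₁ f₂ x) (h : f₁ x' = f₁ x) : f₂ x ≤ f₂ x' := by
  obtain ⟨lam₀, ⟨-, hlam₀⟩, hmin⟩ := hx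
  have := sub_nonneg.mpr (hmin x')
  rw [wsum_sub_wsum_of_f₁_eq f₁ f₂ h, mul_nonneg_iff_of_pos_left (by linarith)] at this
  exact sub_nonneg.mp this

lemma objSlope_neg (hx : SuppEff f₁ f₂ x) (h : x' ∈ Xlt f₁ x) : objSlope f₁ f₂ x' x < 0 := by
  obtain ⟨lam₀, ⟨hlam₀, hlam₀'⟩, hmin⟩ := hx
  have := (wsum_le_wsum_iff_of_f₁_lt f₁ f₂ h).mp (hmin x')
  exact neg_of_mul_neg_right (by linarith) (by linarith : 0 ≤ 1 - lam₀)

end SuppEff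

end WeightedSum

section ExtremalSlopes

variable {X : Type*} (f₁ f₂ : X → ℝ) (x : X) {lam : ℝ}

lemma lamOf_coe (r : ℝ) : lamOf r = r / (r - 1) := by
  rw [lamOf, if_neg (EReal.coe_ne_bot r), EReal.toReal_coe]

lemma alphaLow_eq_coe {m : ℝ} (hm : IsGreatest ((objSlope f₁ f₂ · x) '' Xlt f₁ x) m) :
    alphaLow f₁ f₂ x = m := by
  rw [alphaLow, ← image_image (fun s : ℝ => (s : EReal)), sSup_union, sSup_singleton, sup_bot_eq,
    (EReal.coe_strictMono.map_isGreatest.mpr hm).csSup_eq]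

lemma alphaHigh_eq_coe {b : ℝ} (hb : IsLeast ((objSlope f₁ f₂ · x) '' Xgt f₁ x ∪ {0}) b) :
    alphaHigh f₁ f₂ x = b := by
  rw [alphaHigh, ← image_image (fun s : ℝ => (s : EReal)), ← EReal.coe_zero, ← image_singleton,
    ← image_union, (EReal.coe_strictMono.map_isLeast.mpr hb).csInf_eq]

lemma le_lamOf_alphaLow_iff [Finite X] (hlam : lam ≤ 1)
    (hslope : ∀ x' ∈ Xlt f₁ x, objSlope f₁ f₂ x' x < 1) :
    lam ≤ lamOf (alphaLow f₁ f₂ x) ↔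
      ∀ x' ∈ Xlt f₁ x, lam + (1 - lam) * objSlope f₁ f₂ x' x ≤ 0 := by
  rcases (Xlt f₁ x).eq_empty_or_nonempty with hempty | hne
  · simp [alphaLow, lamOf, hempty, hlam]
  set S := (objSlope f₁ f₂ · x) '' Xlt f₁ x
  have hfin : S.Finite := (toFinite _).image _
  have hm : IsGreatest S (sSup S) :=
    ⟨(hne.image _).csSup_mem hfin, fun _ hs => le_csSup hfin.bddAbove hs⟩
  obtain ⟨x₀, hx₀, hx₀m⟩ := hm.1
  rw [alphaLow_eq_coe f₁ f₂ x hm, lamOf_coe, le_div_sub_one_iff (hx₀m ▸ hslope x₀ hx₀),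
    isLUB_le_iff ((monotone_add_one_sub_mul hlam).map_isGreatest hm).isLUB]
  simp only [S, mem_upperBounds, forall_mem_image]

lemma lamOf_alphaHigh_le_iff [Finite X] (hlam : lam ∈ Icc (0 : ℝ) 1) :
    lamOf (alphaHigh f₁ f₂ x) ≤ lam ↔
      ∀ x' ∈ Xgt f₁ x, 0 ≤ lam + (1 - lam) * objSlope f₁ f₂ x' x := by
  set T := (objSlope f₁ f₂ · x) '' Xgt f₁ x ∪ {0}
  have hfin : T.Finite := ((toFinite _).image _).union (finite_singleton _)
  have hb : IsLeast T (sInf T) :=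
    ⟨(union_nonempty.mpr (.inr (singleton_nonempty _))).csInf_mem hfin,
      fun _ ht => csInf_le hfin.bddBelow ht⟩
  have hb0 : sInf T ≤ 0 := hb.2 (mem_union_right _ rfl)
  rw [alphaHigh_eq_coe f₁ f₂ x hb, lamOf_coe, div_sub_one_le_iff (by linarith),
    le_isGLB_iff ((monotone_add_one_sub_mul hlam.2).map_isLeast hb).isGLB]
  simp [T, mem_lowerBounds, or_imp, forall_and, hlam.1]

end ExtremalSlopes

theorem weight_set_component_eq_interval_general
    {X : Type*} [Fintype X] (f₁ f₂ : X → ℝ) (x : X)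
    (hx : SuppEff f₁ f₂ x) :
    ∀ lam ∈ Set.Icc (0 : ℝ) 1,
      (x ∈ XlamSet f₁ f₂ lam ↔
        lamOf (alphaHigh f₁ f₂ x) ≤ lam ∧ lam ≤ lamOf (alphaLow f₁ f₂ x)) := by
  intro lam hlam
  rw [mem_XlamSet_iff_objSlope f₁ f₂ hlam.2 fun _ => hx.f₂_le_of_f₁_eq,
    lamOf_alphaHigh_le_iff f₁ f₂ x hlam,
    le_lamOf_alphaLow_iff f₁ f₂ x hlam.2 fun _ h => (hx.objSlope_neg h).trans zero_lt_one]

/-- For a supported efficient solution `x`, the weight set component of `x`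
is the closed interval `[λ(α^x), λ(α_x)]`: for every `λ ∈ [0,1]`, `x ∈ X_λ` if and only if
`λ(α^x) ≤ λ ≤ λ(α_x)`. -/
theorem weight_set_component_eq_interval
    {X : Type*} [Fintype X] [Nonempty X] (f₁ f₂ : X → ℝ) (x : X)
    (hx : SuppEff f₁ f₂ x) :
    ∀ lam ∈ Set.Icc (0 : ℝ) 1,
      (x ∈ XlamSet f₁ f₂ lam ↔
        lamOf (alphaHigh f₁ f₂ x) ≤ lam ∧ lam ≤ lamOf (alphaLow f₁ f₂ x)) :=
  weight_set_component_eq_interval_general f₁ f₂ x hx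
end
end

section
/- Let x ∈ X_SE be a supported efficient solution and let x' ∈ X^<(x) satisfy s(x',x) = α_x (in particular α_x > −∞). Then α^{x'} = α_x, i.e., the minimum slope from x' to points with larger first objective value equals the maximum slope from x to points with smaller first objective value. -/
open Set

noncomputable section

/-- Let `x` be supported efficient and let `x' ∈ X^<(x)` satisfy
`s(x',x) = α_x`. Then `α^{x'} = α_x`. -/
theorem alphaHigh_eq_alphaLow_of_max_slope
    {X : Type*} [Fintype X] [Nonempty X] (f₁ f₂ : X → ℝ) (x x' : X)
    (hx : SuppEff f₁ f₂ x) (hx' : x' ∈ Xlt f₁ x)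
    (hs : (objSlope f₁ f₂ x' x : EReal) = alphaLow f₁ f₂ x) :
    alphaHigh f₁ f₂ x' = alphaLow f₁ f₂ x := by
  rw [← hs]
  obtain ⟨lam, ⟨hl0, hl1⟩, hmin⟩ := hx
  set s := objSlope f₁ f₂ x' x with hs_def
  have ha : f₁ x' - f₁ x < 0 := sub_neg.mpr hx'
  have ha' : f₁ x' - f₁ x ≠ 0 := ne_of_lt ha
  have hb : f₂ x' - f₂ x = s * (f₁ x' - f₁ x) := by
    rw [hs_def, objSlope, div_mul_cancel₀ _ ha']
  have h1l : (0:ℝ) < 1 - lam := by linarith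
  have hopt : ∀ y : X, 0 ≤ lam * (f₁ y - f₁ x) + (1 - lam) * (f₂ y - f₂ x) := by
    intro y
    have h := hmin y
    simp only [XlamSet, wsum, Set.mem_setOf_eq] at h
    have h' := h
    nlinarith [hmin y]
  have hsle : lam + (1 - lam) * s ≤ 0 := by
    have h := hopt x'
    rw [hb] at h
    nlinarith
  have hsneg : s < 0 := by nlinarith
  -- key lemma
  have hkey : ∀ y : X, s * (f₁ y - f₁ x) ≤ f₂ y - f₂ x := by
    intro y
    rcases lt_or_ge (f₁ y) (f₁ x) with hc | hc
    · have hmem : (objSlope f₁ f₂ y x : EReal) ≤ (s : EReal) := by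
        rw [hs]
        exact le_sSup (Set.mem_union_left _ ⟨y, hc, rfl⟩)
      have hle : objSlope f₁ f₂ y x ≤ s := by exact_mod_cast hmem
      rw [objSlope] at hle
      have hc' : f₁ y - f₁ x < 0 := sub_neg.mpr hc
      have := (div_le_iff_of_neg hc').mp hle
      linarith
    · have h := hopt y
      have hc' : 0 ≤ f₁ y - f₁ x := by linarith
      nlinarith [mul_nonpos_of_nonpos_of_nonneg hsle hc']
  apply le_antisymm
  · apply sInf_le
    apply Set.mem_union_left
    refine ⟨x, hx', ?_⟩
    have : objSlope f₁ f₂ x x' = s := by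
      rw [objSlope, hs_def, objSlope, ← neg_sub (f₂ x'), ← neg_sub (f₁ x'), neg_div_neg_eq]
    show (objSlope f₁ f₂ x x' : EReal) = (s : EReal)
    exact_mod_cast this
  · apply le_sInf
    rintro b (⟨y, hy, rfl⟩ | hb0)
    · have hyx' : f₁ x' < f₁ y := hy
      have hd : 0 < f₁ y - f₁ x' := sub_pos.mpr hyx'
      have : s ≤ objSlope f₁ f₂ y x' := by
        rw [objSlope, le_div_iff₀ hd]
        nlinarith [hkey y]
      simp only []
      exact_mod_cast this
    · simp only [Set.mem_singleton_iff] at hb0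
      subst hb0
      have : (s : EReal) ≤ ((0:ℝ) : EReal) := by exact_mod_cast hsneg.le
      simpa using this
end
end

section
/- Let λ ∈ (0,1), x ∈ X_λ, and x' ∈ X. If x' ∈ X^<(x) then s(x',x) ≤ α(λ), and if x' ∈ X^>(x) then s(x',x) ≥ α(λ). In particular, if in addition x' ∈ X_λ and f(x) ≠ f(x'), then s(x',x) = α(λ). -/
open Set

noncomputable section

/-- `α(λ) = −λ/(1−λ)` for `λ ∈ [0,1)`. -/
def alphaOf (lam : ℝ) : ℝ := -lam / (1 - lam)

/-!
Optimality of `x` for the weight `λ` against `x'` reads `λ (f₁ x - f₁ x') ≤ (1 - λ) (f₂ x' - f₂ x)`.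
Dividing by `(1 - λ) (f₁ x' - f₁ x)` gives the upper or lower bound `α(λ)` on the slope according
to the sign of `f₁ x' - f₁ x`. When `x'` is optimal too, the same inequality with `x` and `x'`
swapped gives the opposite bound, since the slope is symmetric.
-/

section

variable {X : Type*} (f₁ f₂ : X → ℝ) {lam : ℝ} {x x' : X}

theorem objSlope_comm : objSlope f₁ f₂ x x' = objSlope f₁ f₂ x' x := by
  rw [objSlope, objSlope, ← neg_sub (f₂ x'), ← neg_sub (f₁ x'), neg_div_neg_eq]

theorem wsum_le_wsum_iff :
    wsum f₁ f₂ lam x ≤ wsum f₁ f₂ lam x' ↔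
      lam * (f₁ x - f₁ x') ≤ (1 - lam) * (f₂ x' - f₂ x) := by
  rw [wsum, wsum]
  constructor <;> intro h <;> linarith

theorem objSlope_le_alphaOf (hlam : lam < 1) (hlt : x' ∈ Xlt f₁ x)
    (h : wsum f₁ f₂ lam x ≤ wsum f₁ f₂ lam x') : objSlope f₁ f₂ x' x ≤ alphaOf lam := by
  have hd : f₁ x' - f₁ x < 0 := sub_neg.mpr hlt
  rw [wsum_le_wsum_iff] at h
  rw [objSlope, alphaOf, div_le_iff_of_neg hd, div_mul_eq_mul_div, div_le_iff₀ (sub_pos.mpr hlam)]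
  linarith

theorem alphaOf_le_objSlope (hlam : lam < 1) (hgt : x' ∈ Xgt f₁ x)
    (h : wsum f₁ f₂ lam x ≤ wsum f₁ f₂ lam x') : alphaOf lam ≤ objSlope f₁ f₂ x' x := by
  have hd : 0 < f₁ x' - f₁ x := sub_pos.mpr hgt
  rw [wsum_le_wsum_iff] at h
  rw [objSlope, alphaOf, div_le_div_iff₀ (sub_pos.mpr hlam) hd]
  linarith

theorem fst_ne_of_mem_XlamSet (hlam : lam < 1) (hx : x ∈ XlamSet f₁ f₂ lam)
    (hx' : x' ∈ XlamSet f₁ f₂ lam) (hne : (f₁ x, f₂ x) ≠ (f₁ x', f₂ x')) : f₁ x ≠ f₁ x' := by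
  intro h₁
  have hle := (wsum_le_wsum_iff f₁ f₂).mp (hx x')
  have hge := (wsum_le_wsum_iff f₁ f₂).mp (hx' x)
  rw [h₁, sub_self, mul_zero] at hle hge
  have h₂ : f₂ x = f₂ x' := by nlinarith [sub_pos.mpr hlam]
  exact hne (by rw [h₁, h₂])

theorem objSlope_eq_alphaOf_of_mem_XlamSet (hlam : lam < 1) (hx : x ∈ XlamSet f₁ f₂ lam)
    (hx' : x' ∈ XlamSet f₁ f₂ lam) (hne : (f₁ x, f₂ x) ≠ (f₁ x', f₂ x')) :
    objSlope f₁ f₂ x' x = alphaOf lam := by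
  rcases (fst_ne_of_mem_XlamSet f₁ f₂ hlam hx hx' hne).lt_or_gt with hlt | hgt
  · refine le_antisymm ?_ (alphaOf_le_objSlope f₁ f₂ hlam hlt (hx x'))
    exact objSlope_comm f₁ f₂ ▸ objSlope_le_alphaOf f₁ f₂ hlam hlt (hx' x)
  · refine le_antisymm (objSlope_le_alphaOf f₁ f₂ hlam hgt (hx x')) ?_
    exact objSlope_comm f₁ f₂ ▸ alphaOf_le_objSlope f₁ f₂ hlam hgt (hx' x)

end

theorem slope_le_alpha_of_optimal_general
    {X : Type*} (f₁ f₂ : X → ℝ) (lam : ℝ)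
    (hlam : lam ∈ Set.Ioo (0 : ℝ) 1) (x x' : X) (hx : x ∈ XlamSet f₁ f₂ lam) :
    (x' ∈ Xlt f₁ x → objSlope f₁ f₂ x' x ≤ alphaOf lam) ∧
    (x' ∈ Xgt f₁ x → alphaOf lam ≤ objSlope f₁ f₂ x' x) ∧
    (x' ∈ XlamSet f₁ f₂ lam → (f₁ x, f₂ x) ≠ (f₁ x', f₂ x') →
      objSlope f₁ f₂ x' x = alphaOf lam) :=
  ⟨fun hlt => objSlope_le_alphaOf f₁ f₂ hlam.2 hlt (hx x'),
    fun hgt => alphaOf_le_objSlope f₁ f₂ hlam.2 hgt (hx x'),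
    objSlope_eq_alphaOf_of_mem_XlamSet f₁ f₂ hlam.2 hx⟩

/-- Let `λ ∈ (0,1)`, `x ∈ X_λ`, and `x' ∈ X`. If `x' ∈ X^<(x)` then
`s(x',x) ≤ α(λ)`, and if `x' ∈ X^>(x)` then `s(x',x) ≥ α(λ)`. In particular, if in addition
`x' ∈ X_λ` and `f(x) ≠ f(x')`, then `s(x',x) = α(λ)`. -/
theorem slope_le_alpha_of_optimal
    {X : Type*} [Fintype X] [Nonempty X] (f₁ f₂ : X → ℝ) (lam : ℝ)
    (hlam : lam ∈ Set.Ioo (0 : ℝ) 1) (x x' : X) (hx : x ∈ XlamSet f₁ f₂ lam) :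
    (x' ∈ Xlt f₁ x → objSlope f₁ f₂ x' x ≤ alphaOf lam) ∧
    (x' ∈ Xgt f₁ x → alphaOf lam ≤ objSlope f₁ f₂ x' x) ∧
    (x' ∈ XlamSet f₁ f₂ lam → (f₁ x, f₂ x) ≠ (f₁ x', f₂ x') →
      objSlope f₁ f₂ x' x = alphaOf lam) :=
  slope_le_alpha_of_optimal_general f₁ f₂ lam hlam x x' hx
end
end

section
/- Let x⁰ ∈ X_SE be an arbitrary supported efficient solution and let x¹, …, x^l ∈ X be such that for each k ∈ {1,…,l}, X^<(x^{k−1}) ≠ ∅ and x^k maximizes s(x', x^{k−1}) over x' ∈ X^<(x^{k−1}), and X^<(x^l) = ∅. Then every x^k is supported efficient and every extreme-supported non-dominated point y ∈ Y_ESN with y₂ ≥ f₂(x⁰) equals f(x^k) for some k ∈ {0,…,l}. -/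
open Set

noncomputable section

open Pointwise

/-- `x` is lexicographically optimal with respect to `(f₂, f₁)`. -/
def LexOpt21 {X : Type*} (f₁ f₂ : X → ℝ) (x : X) : Prop :=
  (∀ x' : X, f₂ x ≤ f₂ x') ∧ ∀ x' : X, f₂ x' = f₂ x → f₁ x ≤ f₁ x'

/-- The outcome set `f(X) ⊆ ℝ²`. -/
def outcomes {X : Type*} (f₁ f₂ : X → ℝ) : Set (ℝ × ℝ) :=
  Set.range fun x => (f₁ x, f₂ x)

/-- `y` is an extreme-supported non-dominated point: `y = f(x)` for some supported efficient
`x`, and `y` is an extreme point of `conv(f(X)) + ℝ²_{≥0}`. -/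
def ESN {X : Type*} (f₁ f₂ : X → ℝ) (y : ℝ × ℝ) : Prop :=
  (∃ x, SuppEff f₁ f₂ x ∧ (f₁ x, f₂ x) = y) ∧
    y ∈ Set.extremePoints ℝ
      (convexHull ℝ (outcomes f₁ f₂) + {p : ℝ × ℝ | 0 ≤ p.1 ∧ 0 ≤ p.2})

section Helpers

variable {X : Type*} (f₁ f₂ : X → ℝ)

/-- Key step lemma: if `a` is optimal for some weight in `(0,1)` and `b` maximizes the slope
over `X^<(a) ∋ b`, then `b` is optimal for some weight in `(0,1)`. -/
lemma aux_step {a b : X} {μ : ℝ} (hμ0 : 0 < μ) (hμ1 : μ < 1)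
    (ha : a ∈ XlamSet f₁ f₂ μ) (hb : f₁ b < f₁ a)
    (hmax : ∀ x', f₁ x' < f₁ a → objSlope f₁ f₂ x' a ≤ objSlope f₁ f₂ b a) :
    ∃ lam ∈ Set.Ioo (0:ℝ) 1, b ∈ XlamSet f₁ f₂ lam := by
  have ha' : ∀ x', μ * f₁ a + (1 - μ) * f₂ a ≤ μ * f₁ x' + (1 - μ) * f₂ x' := ha
  set s := objSlope f₁ f₂ b a with hs
  have hd : f₁ b - f₁ a < 0 := by linarith
  have hdne : f₁ b - f₁ a ≠ 0 := ne_of_lt hd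
  have hab : f₂ b - f₂ a = s * (f₁ b - f₁ a) := by
    rw [hs, objSlope, div_mul_cancel₀ _ hdne]
  have h2ab : f₂ a < f₂ b := by
    nlinarith [ha' b, mul_pos hμ0 (sub_pos.mpr hb), hμ0, hμ1]
  have hsneg : s < 0 := by
    rw [hs, objSlope]
    exact div_neg_of_pos_of_neg (by linarith) hd
  have h0 : 0 ≤ ((1 - μ) * s + μ) * (f₁ b - f₁ a) := by
    have e : ((1 - μ) * s + μ) * (f₁ b - f₁ a)
        = (μ * f₁ b + (1 - μ) * f₂ b) - (μ * f₁ a + (1 - μ) * f₂ a) := by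
      linear_combination (μ - 1) * hab
    rw [e]
    linarith [ha' b]
  have hkey : (1 - μ) * s + μ ≤ 0 := by nlinarith [h0, hd]
  have K : ∀ x', s * (f₁ x' - f₁ a) ≤ f₂ x' - f₂ a := by
    intro x'
    rcases lt_trichotomy (f₁ x') (f₁ a) with h | h | h
    · have h1 := hmax x' h
      rw [objSlope] at h1
      exact (div_le_iff_of_neg (by linarith : f₁ x' - f₁ a < 0)).mp h1
    · rw [h]
      have h2 := ha' x'
      rw [h] at h2
      nlinarith [h2, hμ0, hμ1]
    · have h1 : ((1 - μ) * s + μ) * (f₁ x' - f₁ a) ≤ 0 :=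
        mul_nonpos_iff.mpr (Or.inr ⟨hkey, by linarith⟩)
      nlinarith [h1, ha' x', hμ0, hμ1]
  have hs1 : s - 1 < 0 := by linarith
  refine ⟨s / (s - 1), ⟨?_, ?_⟩, ?_⟩
  · exact div_pos_of_neg_of_neg hsneg hs1
  · have hls : s / (s - 1) * (s - 1) = s := div_mul_cancel₀ _ (ne_of_lt hs1)
    nlinarith [hls, hsneg, hs1]
  · set lam := s / (s - 1) with hlam
    have hls : lam * (s - 1) = s := div_mul_cancel₀ _ (ne_of_lt hs1)
    have hlam0 : 0 < lam := div_pos_of_neg_of_neg hsneg hs1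
    have hlam1 : lam < 1 := by nlinarith [hls, hsneg, hs1]
    have h1l : 0 < 1 - lam := by linarith
    have hid : lam + s * (1 - lam) = 0 := by linear_combination -hls
    have hw : ∀ z, wsum f₁ f₂ lam z = (1 - lam) * (f₂ z - s * f₁ z) := by
      intro z
      simp only [wsum]
      linear_combination (f₁ z) * hid
    intro x'
    rw [hw b, hw x']
    apply mul_le_mul_of_nonneg_left _ (le_of_lt h1l)
    nlinarith [K x', hab]

/-- An extreme point of `conv(f(X)) + ℝ²₊` is not (weakly) dominated by an outcome,
except when equal to it. -/
lemma extreme_dom {y p : ℝ × ℝ}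
    (hy : y ∈ Set.extremePoints ℝ
      (convexHull ℝ (outcomes f₁ f₂) + {p : ℝ × ℝ | 0 ≤ p.1 ∧ 0 ≤ p.2}))
    (hp : p ∈ outcomes f₁ f₂) (h1 : p.1 ≤ y.1) (h2 : p.2 ≤ y.2) : p = y := by
  set D := convexHull ℝ (outcomes f₁ f₂) + {p : ℝ × ℝ | 0 ≤ p.1 ∧ 0 ≤ p.2} with hD
  have hpD : p ∈ D := by
    have h := Set.add_mem_add (subset_convexHull ℝ (outcomes f₁ f₂) hp)
      (show (0:ℝ×ℝ) ∈ {p : ℝ × ℝ | 0 ≤ p.1 ∧ 0 ≤ p.2} from ⟨le_refl 0, le_refl 0⟩)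
    simpa using h
  have hqD : p + (2:ℝ) • (y - p) ∈ D := by
    refine Set.add_mem_add (subset_convexHull ℝ (outcomes f₁ f₂) hp) ?_
    constructor
    · simp only [Prod.smul_fst, Prod.fst_sub, smul_eq_mul]
      linarith
    · simp only [Prod.smul_snd, Prod.snd_sub, smul_eq_mul]
      linarith
  have hseg : y ∈ openSegment ℝ p (p + (2:ℝ) • (y - p)) :=
    ⟨1/2, 1/2, by norm_num, by norm_num, by norm_num, by module⟩
  exact hy.2 hpD hqD hseg

/-- An extreme point of `conv(f(X)) + ℝ²₊` cannot be a proper convex combination of two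
outcomes (with distinct first coordinates) shifted up. -/
lemma extreme_between {y p q : ℝ × ℝ} {θ t : ℝ}
    (hy : y ∈ Set.extremePoints ℝ
      (convexHull ℝ (outcomes f₁ f₂) + {p : ℝ × ℝ | 0 ≤ p.1 ∧ 0 ≤ p.2}))
    (hp : p ∈ outcomes f₁ f₂) (hq : q ∈ outcomes f₁ f₂)
    (hθ0 : 0 < θ) (hθ1 : θ < 1) (ht : 0 ≤ t)
    (heq : θ • p + (1 - θ) • q + ((0:ℝ), t) = y) : p = q := by
  have hpD : p + ((0:ℝ), t) ∈ convexHull ℝ (outcomes f₁ f₂) + {p : ℝ × ℝ | 0 ≤ p.1 ∧ 0 ≤ p.2} :=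
    Set.add_mem_add (subset_convexHull ℝ (outcomes f₁ f₂) hp) ⟨le_refl 0, ht⟩
  have hqD : q + ((0:ℝ), t) ∈ convexHull ℝ (outcomes f₁ f₂) + {p : ℝ × ℝ | 0 ≤ p.1 ∧ 0 ≤ p.2} :=
    Set.add_mem_add (subset_convexHull ℝ (outcomes f₁ f₂) hq) ⟨le_refl 0, ht⟩
  have hseg : y ∈ openSegment ℝ (p + ((0:ℝ), t)) (q + ((0:ℝ), t)) := by
    refine ⟨θ, 1 - θ, hθ0, by linarith, by ring, ?_⟩
    have e : θ • (p + ((0:ℝ), t)) + (1 - θ) • (q + ((0:ℝ), t))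
        = θ • p + (1 - θ) • q + ((0:ℝ), t) := by module
    rw [e, heq]
  have e1 := hy.2 hpD hqD hseg
  have e2 := hy.2 hqD hpD (by rw [openSegment_symm]; exact hseg)
  exact add_right_cancel (e1.trans e2.symm)

end Helpers

/-- Starting from an arbitrary supported efficient solution `x⁰`, if each
`x^k` (`1 ≤ k ≤ l`) maximizes the slope over `X^<(x^{k−1}) ≠ ∅` and `X^<(x^l) = ∅`, then
every `x^k` is supported efficient and every extreme-supported non-dominated point `y` with
`y₂ ≥ f₂(x⁰)` is the image of some `x^k`. -/
theorem global_algorithm_from_midway_correct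
    {X : Type*} [Fintype X] [Nonempty X] (f₁ f₂ : X → ℝ)
    (l : ℕ) (x : ℕ → X)
    (h0 : SuppEff f₁ f₂ (x 0))
    (hstep : ∀ k, 1 ≤ k → k ≤ l →
      x k ∈ Xlt f₁ (x (k - 1)) ∧
        ∀ x' ∈ Xlt f₁ (x (k - 1)),
          objSlope f₁ f₂ x' (x (k - 1)) ≤ objSlope f₁ f₂ (x k) (x (k - 1)))
    (hend : Xlt f₁ (x l) = ∅) :
    (∀ k ≤ l, SuppEff f₁ f₂ (x k)) ∧
    ∀ y : ℝ × ℝ, ESN f₁ f₂ y → f₂ (x 0) ≤ y.2 → ∃ k ≤ l, (f₁ (x k), f₂ (x k)) = y := by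
  classical
  -- Part A: every x k is supported efficient.
  have hA : ∀ k, k ≤ l → ∃ lam ∈ Set.Ioo (0:ℝ) 1, x k ∈ XlamSet f₁ f₂ lam := by
    intro k
    induction k with
    | zero => exact fun _ => h0
    | succ n ih =>
      intro h
      obtain ⟨μ, hμ, hxn⟩ := ih (le_trans (Nat.le_succ n) h)
      obtain ⟨hbmem, hmax⟩ := hstep (n + 1) (by omega) h
      simp only [Nat.add_sub_cancel] at hbmem hmax
      exact aux_step f₁ f₂ hμ.1 hμ.2 hxn hbmem (fun x' h' => hmax x' h')
  refine ⟨fun k hk => hA k hk, ?_⟩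
  intro y hy hy2
  obtain ⟨⟨w, _, hwy⟩, hyext⟩ := hy
  subst hwy
  by_cases hc : f₁ (x 0) ≤ f₁ w
  · refine ⟨0, Nat.zero_le l, extreme_dom f₁ f₂ hyext ⟨x 0, rfl⟩ hc hy2⟩
  · push_neg at hc
    have hQl : f₁ (x l) ≤ f₁ w := by
      by_contra h
      push_neg at h
      have hmem : w ∈ Xlt f₁ (x l) := h
      rw [hend] at hmem
      exact (Set.notMem_empty w) hmem
    have hQ : ∃ m, f₁ (x m) ≤ f₁ w := ⟨l, hQl⟩
    set k := Nat.find hQ with hkdef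
    have hkQ : f₁ (x k) ≤ f₁ w := Nat.find_spec hQ
    have hkle : k ≤ l := Nat.find_le hQl
    have hk1 : 1 ≤ k := by
      rcases Nat.eq_zero_or_pos k with h | h
      · exfalso; rw [h] at hkQ; linarith
      · exact h
    have hprev : f₁ w < f₁ (x (k - 1)) := by
      have h := Nat.find_min hQ (show k - 1 < k by omega)
      exact lt_of_not_ge h
    obtain ⟨hbmem, hmax⟩ := hstep k hk1 hkle
    have hba : f₁ (x k) < f₁ (x (k - 1)) := hbmem
    obtain ⟨μ, hμ, hxk⟩ := hA k hkle
    rcases eq_or_lt_of_le hkQ with heq | hlt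
    · refine ⟨k, hkle, extreme_dom f₁ f₂ hyext ⟨x k, rfl⟩ heq.le ?_⟩
      have h2 : μ * f₁ (x k) + (1 - μ) * f₂ (x k) ≤ μ * f₁ w + (1 - μ) * f₂ w := hxk w
      show f₂ (x k) ≤ f₂ w
      nlinarith [h2, heq, hμ.1, hμ.2]
    · exfalso
      set a := x (k - 1) with hadef
      set b := x k with hbdef
      have hwlt : f₁ w < f₁ a := hprev
      have hslope := hmax w hwlt
      set s := objSlope f₁ f₂ b a with hsdef
      have hdne : f₁ b - f₁ a ≠ 0 := ne_of_lt (by linarith : f₁ b - f₁ a < 0)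
      have hab : f₂ b - f₂ a = s * (f₁ b - f₁ a) := by
        rw [hsdef, objSlope, div_mul_cancel₀ _ hdne]
      have hslope' : s * (f₁ w - f₁ a) ≤ f₂ w - f₂ a := by
        rw [objSlope] at hslope
        exact (div_le_iff_of_neg (by linarith : f₁ w - f₁ a < 0)).mp hslope
      have hden : 0 < f₁ a - f₁ b := by linarith
      set θ := (f₁ w - f₁ b) / (f₁ a - f₁ b) with hθdef
      have hθ0 : 0 < θ := div_pos (by linarith) hden
      have hθ1 : θ < 1 := (div_lt_one hden).mpr (by linarith)
      have hθD : θ * (f₁ a - f₁ b) = f₁ w - f₁ b := div_mul_cancel₀ _ (ne_of_gt hden)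
      have h1θ : (1 - θ) * (f₁ b - f₁ a) = f₁ w - f₁ a := by linear_combination hθD
      set t := f₂ w - (θ * f₂ a + (1 - θ) * f₂ b) with htdef
      have hcomb : θ * f₂ a + (1 - θ) * f₂ b = f₂ a + s * (f₁ w - f₁ a) := by
        linear_combination (1 - θ) * hab + s * h1θ
      have ht : 0 ≤ t := by
        rw [htdef, hcomb]
        linarith [hslope']
      have heqy : θ • ((f₁ a, f₂ a) : ℝ × ℝ) + (1 - θ) • ((f₁ b, f₂ b) : ℝ × ℝ)
          + ((0:ℝ), t) = (f₁ w, f₂ w) := by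
        have e1 : θ * f₁ a + (1 - θ) * f₁ b + 0 = f₁ w := by linear_combination hθD
        have e2 : θ * f₂ a + (1 - θ) * f₂ b + t = f₂ w := by rw [htdef]; ring
        simp only [Prod.smul_mk, Prod.mk_add_mk, smul_eq_mul, Prod.mk.injEq]
        exact ⟨e1, e2⟩
      have hpq := extreme_between f₁ f₂ hyext ⟨x (k - 1), rfl⟩ ⟨x k, rfl⟩ hθ0 hθ1 ht heqy
      have : f₁ a = f₁ b := congrArg Prod.fst hpq
      linarith
end
end

section
/- Let R be a binary relation on X satisfying: for every λ ∈ (0,1) and every x ∈ X_λ, if X^<(x) ∩ X_λ ≠ ∅ then X^<(x) ∩ X_λ contains some x' with (x,x') ∈ R. Let x⁰, x¹, …, x^l ∈ X be a sequence such that x⁰ is lexicographically optimal with respect to (f₂,f₁); for each k ∈ {1,…,l}, N^<(x^{k−1}) ≠ ∅ and x^k maximizes s(x', x^{k−1}) over x' ∈ N^<(x^{k−1}); and N^<(x^l) = ∅. Then every x^k is supported efficient and every extreme-supported non-dominated point y ∈ Y_ESN equals f(x^k) for some k ∈ {0,…,l}. -/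
open Set

noncomputable section

open Pointwise

/-- `N^<(x)`: the solutions adjacent to `x` (successors in the adjacency digraph of `R`)
with strictly smaller first objective value. -/
def Nlt {X : Type*} (R : X → X → Prop) (f₁ : X → ℝ) (x : X) : Set X :=
  {x' | x' ∈ Xlt f₁ x ∧ R x x'}

lemma stay_up {X : Type*} (f₁ f₂ : X → ℝ) (x : X) (μ lam : ℝ)
    (h0 : 0 < μ) (hml : μ ≤ lam) (hl1 : lam < 1)
    (hx : x ∈ XlamSet f₁ f₂ μ)
    (hlt : ∀ w ∈ Xlt f₁ x, wsum f₁ f₂ lam x ≤ wsum f₁ f₂ lam w) :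
    x ∈ XlamSet f₁ f₂ lam := by
  intro w
  by_cases hw : f₁ w < f₁ x
  · exact hlt w hw
  · push_neg at hw
    have h := hx w
    unfold wsum at h ⊢
    have ha0 : f₁ x - f₁ w ≤ 0 := by linarith
    have hμab : μ * (f₁ x - f₁ w) ≤ (1 - μ) * (f₂ w - f₂ x) := by nlinarith [h]
    have P1 : 0 ≤ (1 - lam) * ((1 - μ) * (f₂ w - f₂ x) - μ * (f₁ x - f₁ w)) := by
      apply mul_nonneg <;> linarith
    have P2 : 0 ≤ (lam - μ) * (-(f₁ x - f₁ w)) := by apply mul_nonneg <;> linarith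
    have hT' : 0 ≤ (1 - μ) * ((1 - lam) * (f₂ w - f₂ x) - lam * (f₁ x - f₁ w)) := by
      nlinarith [P1, P2]
    have hT : 0 ≤ (1 - lam) * (f₂ w - f₂ x) - lam * (f₁ x - f₁ w) := by nlinarith [hT']
    nlinarith [hT]
lemma lex_base {X : Type*} [Fintype X] [Nonempty X] (f₁ f₂ : X → ℝ) (x0 : X)
    (h : LexOpt21 f₁ f₂ x0) :
    ∃ μ ∈ Ioo (0:ℝ) 1, ∀ lam ∈ Ioc (0:ℝ) μ, x0 ∈ XlamSet f₁ f₂ lam := by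
  classical
  set ρ : X → ℝ := fun w =>
    if f₁ w < f₁ x0 then (f₂ w - f₂ x0) / ((f₁ x0 - f₁ w) + (f₂ w - f₂ x0)) else 1 with hρ
  have hb : ∀ w, f₁ w < f₁ x0 → 0 < f₂ w - f₂ x0 := by
    intro w hw
    rcases lt_or_eq_of_le (h.1 w) with h1 | h1
    · linarith
    · exact absurd (h.2 w h1.symm) (not_le.2 hw)
  have hρpos : ∀ w, 0 < ρ w := by
    intro w
    by_cases hw : f₁ w < f₁ x0
    · simp only [hρ, if_pos hw]
      have := hb w hw
      apply div_pos this (by linarith)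
    · simp [hρ, if_neg hw]
  set μ := min (1/2 : ℝ) (Finset.univ.inf' Finset.univ_nonempty ρ) with hμ
  have hμ0 : 0 < μ := lt_min (by norm_num) ((Finset.lt_inf'_iff _).2 fun w _ => hρpos w)
  have hμ1 : μ < 1 := lt_of_le_of_lt (min_le_left _ _) (by norm_num)
  refine ⟨μ, ⟨hμ0, hμ1⟩, ?_⟩
  rintro lam ⟨hl0, hl1⟩ w
  unfold wsum
  by_cases hw : f₁ w < f₁ x0
  · have hbw := hb w hw
    have hden : 0 < (f₁ x0 - f₁ w) + (f₂ w - f₂ x0) := by linarith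
    have hlρ : lam ≤ ρ w := le_trans hl1 (le_trans (min_le_right _ _)
      (Finset.inf'_le _ (Finset.mem_univ w)))
    rw [hρ] at hlρ; simp only [if_pos hw] at hlρ
    have : lam * ((f₁ x0 - f₁ w) + (f₂ w - f₂ x0)) ≤ f₂ w - f₂ x0 :=
      (le_div_iff₀ hden).1 hlρ
    nlinarith [this]
  · push_neg at hw
    have h2 : f₂ x0 ≤ f₂ w := h.1 w
    have hl1' : lam ≤ 1 := le_of_lt (lt_of_le_of_lt hl1 hμ1)
    nlinarith [h2, hw]
lemma breakpoint {X : Type*} [Fintype X] (f₁ f₂ : X → ℝ) (x : X) (μ : ℝ)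
    (h0 : 0 < μ) (h1 : μ < 1) (hx : x ∈ XlamSet f₁ f₂ μ) (hne : (Xlt f₁ x).Nonempty) :
    ∃ lams, μ ≤ lams ∧ lams < 1 ∧
      (∀ lam, μ ≤ lam → lam ≤ lams → x ∈ XlamSet f₁ f₂ lam) ∧
      (Xlt f₁ x ∩ XlamSet f₁ f₂ lams).Nonempty ∧
      (∀ w' ∈ Xlt f₁ x ∩ XlamSet f₁ f₂ lams, ∀ w ∈ Xlt f₁ x,
        objSlope f₁ f₂ w' x ≤ objSlope f₁ f₂ w x → w ∈ XlamSet f₁ f₂ lams) := by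
  classical
  have hd2 : ∀ w, f₁ w < f₁ x → 0 < f₂ w - f₂ x := by
    intro w hw
    have h := hx w
    unfold wsum at h
    nlinarith [h]
  have denpos : ∀ w, f₁ w < f₁ x → 0 < (f₁ x - f₁ w) + (f₂ w - f₂ x) := by
    intro w hw; have := hd2 w hw; linarith
  set lamf : X → ℝ := fun w => (f₂ w - f₂ x) / ((f₁ x - f₁ w) + (f₂ w - f₂ x)) with hlamf
  set s : Finset X := Finset.univ.filter (fun w => f₁ w < f₁ x) with hsdef
  have hmem_s : ∀ w, w ∈ s ↔ f₁ w < f₁ x := by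
    intro w; simp [hsdef]
  have hs : s.Nonempty := by
    obtain ⟨z0, hz0⟩ := hne
    exact ⟨z0, (hmem_s z0).2 hz0⟩
  set lams := s.inf' hs lamf with hlamsdef
  have key : ∀ w, f₁ w < f₁ x → ∀ lam : ℝ,
      (wsum f₁ f₂ lam x ≤ wsum f₁ f₂ lam w ↔
        lam * ((f₁ x - f₁ w) + (f₂ w - f₂ x)) ≤ f₂ w - f₂ x) := by
    intro w hw lam
    unfold wsum
    constructor <;> intro h <;> nlinarith [h]
  have hμle : ∀ w ∈ s, μ ≤ lamf w := by
    intro w hw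
    have hw' := (hmem_s w).1 hw
    have := (key w hw' μ).1 (hx w)
    rw [hlamf]
    exact (le_div_iff₀ (denpos w hw')).2 this
  have hμlams : μ ≤ lams := Finset.le_inf' hs _ hμle
  obtain ⟨z, hzs, hzeq⟩ := Finset.exists_mem_eq_inf' hs lamf
  have hzlt : f₁ z < f₁ x := (hmem_s z).1 hzs
  have hlams1 : lams < 1 := by
    rw [hlamsdef, hzeq, hlamf]
    rw [div_lt_one (denpos z hzlt)]
    have := hd2 z hzlt; linarith
  have hstay : ∀ lam, μ ≤ lam → lam ≤ lams → x ∈ XlamSet f₁ f₂ lam := by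
    intro lam hml hll
    refine stay_up f₁ f₂ x μ lam h0 hml (lt_of_le_of_lt hll hlams1) hx ?_
    intro w hw
    have hw' : f₁ w < f₁ x := hw
    rw [key w hw' lam]
    have h2 : lams ≤ lamf w := Finset.inf'_le _ ((hmem_s w).2 hw')
    have h3 : lam ≤ lamf w := le_trans hll h2
    rw [hlamf] at h3
    exact (le_div_iff₀ (denpos w hw')).1 h3
  have hxlams : x ∈ XlamSet f₁ f₂ lams := hstay lams hμlams le_rfl
  -- tie: equality of lamf gives optimality
  have tie : ∀ w, f₁ w < f₁ x → lamf w = lams → w ∈ XlamSet f₁ f₂ lams := by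
    intro w hw heq u
    have hden := denpos w hw
    have hnum : lams * ((f₁ x - f₁ w) + (f₂ w - f₂ x)) = f₂ w - f₂ x := by
      rw [← heq, hlamf]
      field_simp
    have heqw : wsum f₁ f₂ lams w = wsum f₁ f₂ lams x := by
      unfold wsum; linear_combination -hnum
    calc wsum f₁ f₂ lams w = wsum f₁ f₂ lams x := heqw
      _ ≤ wsum f₁ f₂ lams u := hxlams u
  refine ⟨lams, hμlams, hlams1, hstay, ⟨z, hzlt, tie z hzlt (by rw [hlamsdef, hzeq])⟩, ?_⟩
  rintro w' ⟨hw'lt, hw'opt⟩ w hwlt hslope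
  have hw'lt' : f₁ w' < f₁ x := hw'lt
  have hwlt' : f₁ w < f₁ x := hwlt
  -- lamf w' = lams
  have heq' : wsum f₁ f₂ lams w' = wsum f₁ f₂ lams x :=
    le_antisymm (hw'opt x) (hxlams w')
  have hnum' : lams * ((f₁ x - f₁ w') + (f₂ w' - f₂ x)) = f₂ w' - f₂ x := by
    unfold wsum at heq'; linear_combination -heq'
  have hlamw' : lamf w' = lams := by
    rw [hlamf]
    rw [div_eq_iff (ne_of_gt (denpos w' hw'lt'))]
    linarith [hnum']
  -- slope monotonicity : lamf w ≤ lamf w'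
  have e1 : objSlope f₁ f₂ w x = -((f₂ w - f₂ x) / (f₁ x - f₁ w)) := by
    unfold objSlope
    rw [show f₁ w - f₁ x = -(f₁ x - f₁ w) by ring, div_neg]
  have e2 : objSlope f₁ f₂ w' x = -((f₂ w' - f₂ x) / (f₁ x - f₁ w')) := by
    unfold objSlope
    rw [show f₁ w' - f₁ x = -(f₁ x - f₁ w') by ring, div_neg]
  rw [e1, e2, neg_le_neg_iff] at hslope
  have cross : (f₂ w - f₂ x) * (f₁ x - f₁ w') ≤ (f₂ w' - f₂ x) * (f₁ x - f₁ w) :=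
    (div_le_div_iff₀ (by linarith : (0:ℝ) < f₁ x - f₁ w)
      (by linarith : (0:ℝ) < f₁ x - f₁ w')).1 hslope
  have hlamle : lamf w ≤ lamf w' := by
    rw [hlamf]
    rw [div_le_div_iff₀ (denpos w hwlt') (denpos w' hw'lt')]
    nlinarith [cross]
  have hlamw : lamf w = lams :=
    le_antisymm (hlamw' ▸ hlamle) (Finset.inf'_le _ ((hmem_s w).2 hwlt'))
  exact tie w hwlt' hlamw
lemma wsum_swap {X : Type*} (f₁ f₂ : X → ℝ) (lam : ℝ) (z : X) :
    wsum f₂ f₁ (1 - lam) z = wsum f₁ f₂ lam z := by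
  unfold wsum; ring

lemma XlamSet_swap {X : Type*} (f₁ f₂ : X → ℝ) (lam : ℝ) :
    XlamSet f₂ f₁ (1 - lam) = XlamSet f₁ f₂ lam := by
  ext z; unfold XlamSet; simp only [mem_setOf_eq, wsum_swap]

lemma interval_left {X : Type*} [Fintype X] [Nonempty X] (f₁ f₂ : X → ℝ) (x₀ : X) (lam0 : ℝ)
    (h0 : 0 < lam0) (h1 : lam0 < 1) (hx : x₀ ∈ XlamSet f₁ f₂ lam0)
    (hmin : ∀ w ∈ XlamSet f₁ f₂ lam0, f₂ x₀ ≤ f₂ w) :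
    ∃ ε > 0, ∀ lam, lam0 - ε < lam → lam ≤ lam0 → x₀ ∈ XlamSet f₁ f₂ lam := by
  classical
  set B : X → ℝ := fun w => (f₁ x₀ - f₁ w) + (f₂ w - f₂ x₀) with hB
  set εf : X → ℝ := fun w =>
    if wsum f₁ f₂ lam0 x₀ < wsum f₁ f₂ lam0 w
    then (wsum f₁ f₂ lam0 w - wsum f₁ f₂ lam0 x₀) / (1 + |B w|) else 1 with hεf
  have hεfpos : ∀ w, 0 < εf w := by
    intro w
    by_cases hc : wsum f₁ f₂ lam0 x₀ < wsum f₁ f₂ lam0 w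
    · simp only [hεf, if_pos hc]
      apply div_pos (by linarith) (by positivity)
    · simp [hεf, if_neg hc]
  refine ⟨Finset.univ.inf' Finset.univ_nonempty εf,
    (Finset.lt_inf'_iff _).2 fun w _ => hεfpos w, ?_⟩
  intro lam hlam1 hlam2 w
  have hid : wsum f₁ f₂ lam x₀ - wsum f₁ f₂ lam w
      = (wsum f₁ f₂ lam0 x₀ - wsum f₁ f₂ lam0 w) + (lam - lam0) * B w := by
    unfold wsum; simp only [hB]; ring
  have hbase := hx w
  by_cases hc : wsum f₁ f₂ lam0 x₀ < wsum f₁ f₂ lam0 w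
  · have hεle : Finset.univ.inf' Finset.univ_nonempty εf ≤ εf w :=
      Finset.inf'_le _ (Finset.mem_univ w)
    have h3 : lam0 - lam < εf w := by linarith
    have hδ : εf w = (wsum f₁ f₂ lam0 w - wsum f₁ f₂ lam0 x₀) / (1 + |B w|) := by
      simp only [hεf, if_pos hc]
    rw [hδ] at h3
    have hpos : (0:ℝ) < 1 + |B w| := by positivity
    have h4 : (lam0 - lam) * (1 + |B w|) < wsum f₁ f₂ lam0 w - wsum f₁ f₂ lam0 x₀ :=
      (lt_div_iff₀ hpos).1 h3
    have habs : (lam - lam0) * B w ≤ (lam0 - lam) * |B w| := by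
      nlinarith [le_abs_self (B w), neg_abs_le (B w), abs_nonneg (B w)]
    nlinarith [habs, h4, abs_nonneg (B w)]
  · have heq : wsum f₁ f₂ lam0 w = wsum f₁ f₂ lam0 x₀ := le_antisymm (not_lt.1 hc) hbase
    have hwmem : w ∈ XlamSet f₁ f₂ lam0 := fun u => heq ▸ hx u
    have hf2 : f₂ x₀ ≤ f₂ w := hmin w hwmem
    have htie : lam0 * (f₁ x₀ - f₁ w) = (1 - lam0) * (f₂ w - f₂ x₀) := by
      unfold wsum at heq; linear_combination -heq
    have h5 : 0 ≤ f₁ x₀ - f₁ w := by nlinarith [htie]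
    have hBpos : 0 ≤ B w := by simp only [hB]; linarith
    nlinarith [hid, mul_nonneg (by linarith : (0:ℝ) ≤ lam0 - lam) hBpos]
lemma exists_infinite_interval {X : Type*} [Fintype X] [Nonempty X] (f₁ f₂ : X → ℝ)
    (x₀ : X) (lam0 : ℝ) (h0 : 0 < lam0) (h1 : lam0 < 1) (hx : x₀ ∈ XlamSet f₁ f₂ lam0)
    (hside : (∀ w ∈ XlamSet f₁ f₂ lam0, f₂ x₀ ≤ f₂ w) ∨
      (∀ w ∈ XlamSet f₁ f₂ lam0, f₂ w ≤ f₂ x₀)) :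
    ∃ I : Set ℝ, I.Infinite ∧ I ⊆ Ioo (0:ℝ) 1 ∧ ∀ lam ∈ I, x₀ ∈ XlamSet f₁ f₂ lam := by
  rcases hside with hmin | hmax
  · obtain ⟨ε, hε, h⟩ := interval_left f₁ f₂ x₀ lam0 h0 h1 hx hmin
    refine ⟨Ioc (max (lam0 - ε) (lam0/2)) lam0, Set.Ioc_infinite ?_, ?_, ?_⟩
    · exact max_lt (by linarith) (by linarith)
    · rintro lam ⟨hl1, hl2⟩
      have h3 := le_max_right (lam0 - ε) (lam0/2)
      exact ⟨by linarith, by linarith⟩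
    · rintro lam ⟨hl1, hl2⟩
      have h3 := le_max_left (lam0 - ε) (lam0/2)
      exact h lam (by linarith) hl2
  · have hx' : x₀ ∈ XlamSet f₂ f₁ (1 - lam0) := by rw [XlamSet_swap]; exact hx
    have hmin' : ∀ w ∈ XlamSet f₂ f₁ (1 - lam0), f₁ x₀ ≤ f₁ w := by
      intro w hw
      rw [XlamSet_swap] at hw
      have hf2 : f₂ w ≤ f₂ x₀ := hmax w hw
      have heq : wsum f₁ f₂ lam0 w = wsum f₁ f₂ lam0 x₀ := le_antisymm (hw x₀) (hx w)
      unfold wsum at heq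
      nlinarith [heq]
    obtain ⟨ε, hε, h⟩ := interval_left f₂ f₁ x₀ (1 - lam0) (by linarith) (by linarith) hx' hmin'
    refine ⟨Ico lam0 (min (lam0 + ε) ((lam0 + 1)/2)), Set.Ico_infinite ?_, ?_, ?_⟩
    · exact lt_min (by linarith) (by linarith)
    · rintro lam ⟨hl1, hl2⟩
      have := lt_of_lt_of_le hl2 (min_le_right _ _)
      exact ⟨lt_of_lt_of_le h0 hl1, by linarith⟩
    · rintro lam ⟨hl1, hl2⟩
      have h2 := lt_of_lt_of_le hl2 (min_le_left _ _)
      have : x₀ ∈ XlamSet f₂ f₁ (1 - lam) := h (1 - lam) (by linarith) (by linarith)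
      rw [XlamSet_swap] at this
      exact this

lemma mem_open_seg {X : Type*} (f₁ f₂ : X → ℝ) (x₀ x₁ x₂ : X) (lam0 : ℝ)
    (h0 : 0 < lam0)
    (hx₀ : x₀ ∈ XlamSet f₁ f₂ lam0) (hx₁ : x₁ ∈ XlamSet f₁ f₂ lam0)
    (hx₂ : x₂ ∈ XlamSet f₁ f₂ lam0)
    (hlt : f₂ x₁ < f₂ x₀) (hgt : f₂ x₀ < f₂ x₂) :
    (f₁ x₀, f₂ x₀) ∈ openSegment ℝ (f₁ x₁, f₂ x₁) (f₁ x₂, f₂ x₂) := by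
  have hden : (0:ℝ) < f₂ x₂ - f₂ x₁ := by linarith
  have t₁ : wsum f₁ f₂ lam0 x₁ = wsum f₁ f₂ lam0 x₀ := le_antisymm (hx₁ x₀) (hx₀ x₁)
  have t₂ : wsum f₁ f₂ lam0 x₂ = wsum f₁ f₂ lam0 x₀ := le_antisymm (hx₂ x₀) (hx₀ x₂)
  unfold wsum at t₁ t₂
  refine ⟨(f₂ x₂ - f₂ x₀)/(f₂ x₂ - f₂ x₁), (f₂ x₀ - f₂ x₁)/(f₂ x₂ - f₂ x₁),
    div_pos (by linarith) hden, div_pos (by linarith) hden, ?_, ?_⟩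
  · field_simp
    ring
  · have hfst : (f₂ x₂ - f₂ x₀)/(f₂ x₂ - f₂ x₁) * f₁ x₁
        + (f₂ x₀ - f₂ x₁)/(f₂ x₂ - f₂ x₁) * f₁ x₂ = f₁ x₀ := by
      rw [div_mul_eq_mul_div, div_mul_eq_mul_div, ← add_div, div_eq_iff (ne_of_gt hden)]
      have key : lam0 * ((f₂ x₂ - f₂ x₀) * f₁ x₁ + (f₂ x₀ - f₂ x₁) * f₁ x₂)
          = lam0 * (f₁ x₀ * (f₂ x₂ - f₂ x₁)) := by
        linear_combination (f₂ x₂ - f₂ x₀) * t₁ + (f₂ x₀ - f₂ x₁) * t₂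
      exact mul_left_cancel₀ (ne_of_gt h0) key
    have hsnd : (f₂ x₂ - f₂ x₀)/(f₂ x₂ - f₂ x₁) * f₂ x₁
        + (f₂ x₀ - f₂ x₁)/(f₂ x₂ - f₂ x₁) * f₂ x₂ = f₂ x₀ := by
      rw [div_mul_eq_mul_div, div_mul_eq_mul_div, ← add_div, div_eq_iff (ne_of_gt hden)]
      ring
    rw [Prod.smul_mk, Prod.smul_mk, Prod.mk_add_mk, Prod.mk.injEq]
    exact ⟨by simpa using hfst, by simpa using hsnd⟩

/-- Suppose the adjacency relation `R` satisfies: for every `λ ∈ (0,1)` and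
every `x ∈ X_λ`, if `X^<(x) ∩ X_λ ≠ ∅` then it contains a successor of `x`. If `x⁰` is
lexicographically optimal w.r.t. `(f₂,f₁)`, each `x^k` maximizes the slope over
`N^<(x^{k−1}) ≠ ∅`, and `N^<(x^l) = ∅`, then every `x^k` is supported efficient and every
extreme-supported non-dominated point is the image of some `x^k`. -/
theorem adjacency_algorithm_correct
    {X : Type*} [Fintype X] [Nonempty X] (f₁ f₂ : X → ℝ) (R : X → X → Prop)
    (hR : ∀ lam ∈ Set.Ioo (0 : ℝ) 1, ∀ x ∈ XlamSet f₁ f₂ lam,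
      (Xlt f₁ x ∩ XlamSet f₁ f₂ lam).Nonempty →
        ∃ x' ∈ Xlt f₁ x ∩ XlamSet f₁ f₂ lam, R x x')
    (l : ℕ) (x : ℕ → X)
    (h0 : LexOpt21 f₁ f₂ (x 0))
    (hstep : ∀ k, 1 ≤ k → k ≤ l →
      x k ∈ Nlt R f₁ (x (k - 1)) ∧
        ∀ x' ∈ Nlt R f₁ (x (k - 1)),
          objSlope f₁ f₂ x' (x (k - 1)) ≤ objSlope f₁ f₂ (x k) (x (k - 1)))
    (hend : Nlt R f₁ (x l) = ∅) :
    (∀ k ≤ l, SuppEff f₁ f₂ (x k)) ∧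
    ∀ y : ℝ × ℝ, ESN f₁ f₂ y → ∃ k ≤ l, (f₁ (x k), f₂ (x k)) = y := by
  classical
  -- main induction
  have main : ∀ k, k ≤ l → ∃ μ, μ ∈ Ioo (0:ℝ) 1 ∧ x k ∈ XlamSet f₁ f₂ μ ∧
      ∀ lam, 0 < lam → lam ≤ μ → ∃ j ≤ k, x j ∈ XlamSet f₁ f₂ lam := by
    intro k
    induction k with
    | zero =>
      intro _
      obtain ⟨μ, hμ, h⟩ := lex_base f₁ f₂ (x 0) h0
      exact ⟨μ, hμ, h μ ⟨hμ.1, le_rfl⟩, fun lam hl1 hl2 => ⟨0, le_rfl, h lam ⟨hl1, hl2⟩⟩⟩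
    | succ n ih =>
      intro hnl
      obtain ⟨μ, hμ, hxn, hcov⟩ := ih (by omega)
      obtain ⟨hmem, hmax⟩ := hstep (n+1) (by omega) hnl
      simp only [Nat.add_sub_cancel] at hmem hmax
      have hxlt : x (n+1) ∈ Xlt f₁ (x n) := hmem.1
      obtain ⟨lams, hμlams, hlams1, hstay, hnon, htrans⟩ :=
        breakpoint f₁ f₂ (x n) μ hμ.1 hμ.2 hxn ⟨x (n+1), hxlt⟩
      have hlams0 : 0 < lams := lt_of_lt_of_le hμ.1 hμlams
      have hxnlams : x n ∈ XlamSet f₁ f₂ lams := hstay lams hμlams le_rfl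
      obtain ⟨x'', hx''mem, hR'⟩ := hR lams ⟨hlams0, hlams1⟩ (x n) hxnlams hnon
      have hslope := hmax x'' ⟨hx''mem.1, hR'⟩
      have hx1opt : x (n+1) ∈ XlamSet f₁ f₂ lams :=
        htrans x'' hx''mem (x (n+1)) hxlt hslope
      refine ⟨lams, ⟨hlams0, hlams1⟩, hx1opt, fun lam hl0 hl2 => ?_⟩
      by_cases hcase : lam ≤ μ
      · obtain ⟨j, hj, hopt⟩ := hcov lam hl0 hcase
        exact ⟨j, by omega, hopt⟩
      · exact ⟨n, by omega, hstay lam (le_of_not_ge hcase) hl2⟩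
  -- coverage of (0,1)
  have cover : ∀ lam, lam ∈ Ioo (0:ℝ) 1 → ∃ k ≤ l, x k ∈ XlamSet f₁ f₂ lam := by
    obtain ⟨μ, hμ, hxl, hcov⟩ := main l le_rfl
    have hXltempty : ∀ w, ¬ (f₁ w < f₁ (x l)) := by
      intro w hw
      obtain ⟨lams, hμlams, hlams1, hstay, hnon, -⟩ :=
        breakpoint f₁ f₂ (x l) μ hμ.1 hμ.2 hxl ⟨w, hw⟩
      obtain ⟨x'', hx''mem, hR'⟩ := hR lams ⟨lt_of_lt_of_le hμ.1 hμlams, hlams1⟩ (x l)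
        (hstay lams hμlams le_rfl) hnon
      have : x'' ∈ Nlt R f₁ (x l) := ⟨hx''mem.1, hR'⟩
      rw [hend] at this
      exact this
    intro lam hlam
    by_cases hcase : lam ≤ μ
    · exact hcov lam hlam.1 hcase
    · refine ⟨l, le_rfl, stay_up f₁ f₂ (x l) μ lam hμ.1 (le_of_not_ge hcase) hlam.2 hxl ?_⟩
      intro w hw
      exact absurd hw (hXltempty w)
  constructor
  · intro k hk
    obtain ⟨μ, hμ, hx, -⟩ := main k hk
    exact ⟨μ, hμ, hx⟩
  · rintro y ⟨⟨x₀, ⟨lam0, hlam0, hx₀opt⟩, hfx₀⟩, hyext⟩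
    subst hfx₀
    -- obtain an infinite interval of optimality for x₀
    have hside : (∀ w ∈ XlamSet f₁ f₂ lam0, f₂ x₀ ≤ f₂ w) ∨
        (∀ w ∈ XlamSet f₁ f₂ lam0, f₂ w ≤ f₂ x₀) := by
      by_contra hcon
      push_neg at hcon
      obtain ⟨⟨x₁, hx₁, hx₁lt⟩, ⟨x₂, hx₂, hx₂gt⟩⟩ := hcon
      have hseg := mem_open_seg f₁ f₂ x₀ x₁ x₂ lam0 hlam0.1 hx₀opt hx₁ hx₂ hx₁lt hx₂gt
      have hmemP : ∀ z : X, (f₁ z, f₂ z) ∈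
          convexHull ℝ (outcomes f₁ f₂) + {p : ℝ × ℝ | 0 ≤ p.1 ∧ 0 ≤ p.2} := by
        intro z
        have h1 : (f₁ z, f₂ z) ∈ convexHull ℝ (outcomes f₁ f₂) :=
          subset_convexHull ℝ _ ⟨z, rfl⟩
        have h2 : ((0:ℝ), (0:ℝ)) ∈ {p : ℝ × ℝ | 0 ≤ p.1 ∧ 0 ≤ p.2} := ⟨le_refl 0, le_refl 0⟩
        have := Set.add_mem_add h1 h2
        simpa using this
      have := hyext.2 (hmemP x₁) (hmemP x₂) hseg
      have h2 := congrArg Prod.snd this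
      simp at h2
      linarith
    obtain ⟨I, hIinf, hIsub, hIopt⟩ :=
      exists_infinite_interval f₁ f₂ x₀ lam0 hlam0.1 hlam0.2 hx₀opt hside
    -- pigeonhole
    have pg : ∃ k, k ≤ l ∧ ∃ a, a ∈ I ∧ ∃ b, b ∈ I ∧ a ≠ b ∧
        x k ∈ XlamSet f₁ f₂ a ∧ x k ∈ XlamSet f₁ f₂ b := by
      by_contra hcon
      push_neg at hcon
      apply hIinf
      have hsub : I ⊆ ⋃ k ∈ Finset.range (l+1), {lam | lam ∈ I ∧ x k ∈ XlamSet f₁ f₂ lam} := by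
        intro lam hlam
        obtain ⟨k, hk, hopt⟩ := cover lam (hIsub hlam)
        exact Set.mem_biUnion (Finset.mem_range.2 (by omega)) ⟨hlam, hopt⟩
      refine Set.Finite.subset (Set.Finite.biUnion (Finset.range (l+1)).finite_toSet
        fun k hk => ?_) hsub
      apply Set.Subsingleton.finite
      rintro a ⟨haI, haopt⟩ b ⟨hbI, hbopt⟩
      by_contra hab
      exact hcon k (by have := Finset.mem_range.1 hk; omega) a haI b hbI hab haopt hbopt
    obtain ⟨k, hk, a, haI, b, hbI, hab, hka, hkb⟩ := pg
    refine ⟨k, hk, ?_⟩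
    have e1 : wsum f₁ f₂ a (x k) = wsum f₁ f₂ a x₀ := le_antisymm (hka x₀) (hIopt a haI (x k))
    have e2 : wsum f₁ f₂ b (x k) = wsum f₁ f₂ b x₀ := le_antisymm (hkb x₀) (hIopt b hbI (x k))
    unfold wsum at e1 e2
    have hABmul : (a - b) * ((f₁ (x k) - f₁ x₀) - (f₂ (x k) - f₂ x₀)) = 0 := by
      linear_combination e1 - e2
    have hAB : (f₁ (x k) - f₁ x₀) - (f₂ (x k) - f₂ x₀) = 0 := by
      rcases mul_eq_zero.1 hABmul with h | h
      · exact absurd (sub_eq_zero.1 h) hab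
      · exact h
    have hA : f₁ (x k) = f₁ x₀ := by linear_combination e1 + (1 - a) * hAB
    have hB : f₂ (x k) = f₂ x₀ := by linear_combination e1 - a * hAB
    rw [hA, hB]
end
end

section
/- Let R be a binary relation on X satisfying: for every λ ∈ (0,1) and every x ∈ X_λ, if X^<(x) ∩ X_λ ≠ ∅ then X^<(x) ∩ X_λ contains some x' with (x,x') ∈ R. Suppose additionally that the set of solutions that are lexicographically optimal with respect to (f₁,f₂) induces a weakly connected subgraph of the adjacency digraph D_R. Then the subgraph of D_R induced by the set X_SE of supported efficient solutions is weakly connected. -/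
open Set

noncomputable section

/-- `x` is lexicographically optimal with respect to `(f₁, f₂)`. -/
def LexOpt12 {X : Type*} (f₁ f₂ : X → ℝ) (x : X) : Prop :=
  (∀ x' : X, f₁ x ≤ f₁ x') ∧ ∀ x' : X, f₁ x' = f₁ x → f₂ x ≤ f₂ x'

/-- `S` induces a connected subgraph of the digraph with arc relation `R`: any two vertices
of `S` are joined by a path staying inside `S` and following arcs of `R`.  Weak connectivity
is obtained by applying this to the symmetrisation of the arc relation. -/
def ConnOn {β : Type*} (R : β → β → Prop) (S : Set β) : Prop :=
  ∀ a ∈ S, ∀ b ∈ S, Relation.ReflTransGen (fun u v => u ∈ S ∧ v ∈ S ∧ R u v) a b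

section Aux
open Filter

variable {X : Type*} [Fintype X] [Nonempty X] (f₁ f₂ : X → ℝ)

lemma wsum_cont (x : X) : Continuous (fun lam => wsum f₁ f₂ lam x) := by
  unfold wsum; fun_prop

lemma lexopt_exists : ∃ x₀ : X, LexOpt12 f₁ f₂ x₀ := by
  obtain ⟨m, -, hm⟩ := Finset.exists_min_image (Finset.univ : Finset X) f₁ Finset.univ_nonempty
  obtain ⟨x₀, hx₀mem, hx₀⟩ := Finset.exists_min_image
    (Finset.univ.filter fun z => f₁ z = f₁ m) f₂ ⟨m, by simp⟩
  simp only [Finset.mem_filter, Finset.mem_univ, true_and] at hx₀mem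
  refine ⟨x₀, fun x' => hx₀mem ▸ hm x' (Finset.mem_univ _), fun x' hx' => ?_⟩
  exact hx₀ x' (by simp [hx', hx₀mem])

variable {f₁ f₂}

lemma lex_vals {x₀ z : X} (h₀ : LexOpt12 f₁ f₂ x₀) (hz : LexOpt12 f₁ f₂ z) :
    f₁ z = f₁ x₀ ∧ f₂ z = f₂ x₀ := by
  have h1 : f₁ z = f₁ x₀ := le_antisymm (hz.1 x₀) (h₀.1 z)
  exact ⟨h1, le_antisymm (hz.2 x₀ h1.symm) (h₀.2 z h1)⟩

lemma exists_lam1 {x₀ : X} (h₀ : LexOpt12 f₁ f₂ x₀) :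
    ∃ lam₁ ∈ Set.Ioo (0:ℝ) 1, ∀ lam ∈ Set.Ico lam₁ 1, ∀ z, ¬ LexOpt12 f₁ f₂ z →
      wsum f₁ f₂ lam x₀ < wsum f₁ f₂ lam z := by
  have hev : ∀ᶠ lam in nhdsWithin 1 (Iio (1:ℝ)), ∀ z, ¬ LexOpt12 f₁ f₂ z →
      wsum f₁ f₂ lam x₀ < wsum f₁ f₂ lam z := by
    rw [eventually_all]
    intro z
    by_cases hz : LexOpt12 f₁ f₂ z
    · filter_upwards with lam h; exact absurd hz h
    · have h1 : f₁ x₀ ≤ f₁ z := h₀.1 z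
      rcases lt_or_eq_of_le h1 with hlt | heq
      · have hcont : Continuous fun lam => wsum f₁ f₂ lam z - wsum f₁ f₂ lam x₀ :=
          (wsum_cont f₁ f₂ z).sub (wsum_cont f₁ f₂ x₀)
        have hval : wsum f₁ f₂ 1 z - wsum f₁ f₂ 1 x₀ = f₁ z - f₁ x₀ := by unfold wsum; ring
        have htt : Filter.Tendsto (fun lam => wsum f₁ f₂ lam z - wsum f₁ f₂ lam x₀)
            (nhdsWithin 1 (Iio (1:ℝ))) (nhds (wsum f₁ f₂ 1 z - wsum f₁ f₂ 1 x₀)) :=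
          (hcont.tendsto 1).mono_left nhdsWithin_le_nhds
        have := htt.eventually
          (eventually_gt_nhds (by rw [hval]; linarith : (0:ℝ) < wsum f₁ f₂ 1 z - wsum f₁ f₂ 1 x₀))
        filter_upwards [this] with lam h _; linarith
      · -- f₁ z = f₁ x₀, so f₂ x₀ < f₂ z
        have h2 : f₂ x₀ < f₂ z := by
          rcases lt_or_eq_of_le (h₀.2 z heq.symm) with h | h
          · exact h
          · exact absurd ⟨fun w => heq ▸ h₀.1 w, fun w hw => h ▸ h₀.2 w (heq ▸ hw)⟩ hz
        filter_upwards [eventually_mem_nhdsWithin] with lam hlam _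
        have hlam1 : lam < 1 := hlam
        unfold wsum; rw [← heq]; nlinarith
  obtain ⟨l, hl, hsub⟩ := mem_nhdsLT_iff_exists_Ioo_subset.1 hev
  refine ⟨(max l 0 + 1)/2, ⟨by positivity, by simp [Iio] at hl; cases' le_total l 0 with h h <;>
    [rw [max_eq_right h]; rw [max_eq_left h]] <;> linarith⟩, fun lam hlam z hz => ?_⟩
  have hmem : lam ∈ Ioo l 1 := by
    constructor
    · have : l < (max l 0 + 1)/2 := by
        have : l ≤ max l 0 := le_max_left _ _
        simp [Iio] at hl; linarith
      linarith [hlam.1]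
    · exact hlam.2
  exact hsub hmem z hz

lemma step_lemma (R : X → X → Prop)
    (hR : ∀ lam ∈ Set.Ioo (0 : ℝ) 1, ∀ x ∈ XlamSet f₁ f₂ lam,
      (Xlt f₁ x ∩ XlamSet f₁ f₂ lam).Nonempty →
        ∃ x' ∈ Xlt f₁ x ∩ XlamSet f₁ f₂ lam, R x x')
    {x₀ : X} (h₀ : LexOpt12 f₁ f₂ x₀) {lam₁ : ℝ} (hlam₁ : lam₁ ∈ Set.Ioo (0:ℝ) 1)
    (hstrict : ∀ lam ∈ Set.Ico lam₁ 1, ∀ z, ¬ LexOpt12 f₁ f₂ z →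
      wsum f₁ f₂ lam x₀ < wsum f₁ f₂ lam z)
    {x : X} (hxL : ¬ LexOpt12 f₁ f₂ x) {μ : ℝ} (hμ : μ ∈ Set.Ioo (0:ℝ) 1)
    (hxμ : x ∈ XlamSet f₁ f₂ μ) :
    ∃ ν ∈ Set.Ioo (0:ℝ) 1, ∃ x' ∈ Xlt f₁ x ∩ XlamSet f₁ f₂ ν, R x x' := by
  have hlex_of : ∀ lam ∈ Set.Ico lam₁ 1, ∀ y ∈ XlamSet f₁ f₂ lam, LexOpt12 f₁ f₂ y := by
    intro lam hl y hy
    by_contra h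
    exact absurd (hy x₀) (not_le.2 (hstrict lam hl y h))
  -- μ < lam₁
  have hμlt : μ < lam₁ := by
    by_contra h
    exact hxL (hlex_of μ ⟨not_lt.1 h, hμ.2⟩ x hxμ)
  set S : Set ℝ := {lam | lam ∈ Icc μ lam₁ ∧ x ∈ XlamSet f₁ f₂ lam} with hSdef
  have hSclosed : IsClosed S := by
    have hrw : S = Icc μ lam₁ ∩ ⋂ z : X, {lam | wsum f₁ f₂ lam x ≤ wsum f₁ f₂ lam z} := by
      ext lam
      simp only [hSdef, Set.mem_setOf_eq, Set.mem_inter_iff, Set.mem_iInter, XlamSet]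
    rw [hrw]
    exact isClosed_Icc.inter (isClosed_iInter fun z =>
      isClosed_le (wsum_cont f₁ f₂ x) (wsum_cont f₁ f₂ z))
  have hSne : S.Nonempty := ⟨μ, ⟨le_refl μ, hμlt.le⟩, hxμ⟩
  have hSbdd : BddAbove S := ⟨lam₁, fun l hl => hl.1.2⟩
  set ν := sSup S with hνdef
  have hνS : ν ∈ S := hSclosed.csSup_mem hSne hSbdd
  have hνx : x ∈ XlamSet f₁ f₂ ν := hνS.2
  have hν0 : 0 < ν := lt_of_lt_of_le hμ.1 hνS.1.1
  have hνlt : ν < lam₁ := by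
    rcases lt_or_eq_of_le hνS.1.2 with h | h
    · exact h
    · exact absurd (hlex_of ν ⟨h.ge, lt_of_eq_of_lt h hlam₁.2⟩ x hνx) hxL
  have hν1 : ν < 1 := hνlt.trans hlam₁.2
  have hne : (Xlt f₁ x ∩ XlamSet f₁ f₂ ν).Nonempty := by
    by_contra hempty
    rw [Set.not_nonempty_iff_eq_empty] at hempty
    have hge : ∀ y, y ∈ XlamSet f₁ f₂ ν → f₁ x ≤ f₁ y := by
      intro y hy
      by_contra h
      exact (Set.eq_empty_iff_forall_notMem.1 hempty y) ⟨not_le.1 h, hy⟩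
    have hIoo : Ioo ν lam₁ ∈ nhdsWithin ν (Ioi ν) :=
      Ioo_mem_nhdsGT_of_mem ⟨le_refl ν, hνlt⟩
    have hev : ∀ᶠ lam in nhdsWithin ν (Ioi ν),
        ∀ z : X, wsum f₁ f₂ lam x ≤ wsum f₁ f₂ lam z := by
      rw [eventually_all]
      intro z
      by_cases hz : z ∈ XlamSet f₁ f₂ ν
      · have heq : wsum f₁ f₂ ν x = wsum f₁ f₂ ν z := le_antisymm (hνx z) (hz x)
        have hf1 : f₁ x ≤ f₁ z := hge z hz
        filter_upwards [eventually_mem_nhdsWithin, hIoo] with lam hlam hlam2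
        have h1 : ν < lam := hlam
        have h2 : lam < 1 := hlam2.2.trans hlam₁.2
        have heq' : ν * f₁ x + (1 - ν) * f₂ x = ν * f₁ z + (1 - ν) * f₂ z := heq
        unfold wsum
        nlinarith [mul_nonneg (sub_nonneg.2 h1.le) (sub_nonneg.2 hf1)]
      · obtain ⟨w, hw⟩ := not_forall.1 hz
        have hpos : 0 < wsum f₁ f₂ ν z - wsum f₁ f₂ ν x := by
          have := hνx w
          have := not_le.1 hw
          linarith
        have hcont : Continuous fun lam => wsum f₁ f₂ lam z - wsum f₁ f₂ lam x :=
          (wsum_cont f₁ f₂ z).sub (wsum_cont f₁ f₂ x)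
        have htt : Filter.Tendsto (fun lam => wsum f₁ f₂ lam z - wsum f₁ f₂ lam x)
            (nhdsWithin ν (Ioi ν)) (nhds (wsum f₁ f₂ ν z - wsum f₁ f₂ ν x)) :=
          (hcont.tendsto ν).mono_left nhdsWithin_le_nhds
        filter_upwards [htt.eventually (eventually_gt_nhds hpos)] with lam h
        linarith
    have hev2 : ∀ᶠ lam in nhdsWithin ν (Ioi ν), lam ∈ S ∧ ν < lam := by
      filter_upwards [hev, hIoo, eventually_mem_nhdsWithin] with lam h1 h2 h3
      exact ⟨⟨⟨(hνS.1.1.trans (le_of_lt h3)), h2.2.le⟩, h1⟩, h3⟩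
    obtain ⟨lam, hlamS, hlt⟩ := hev2.exists
    exact absurd (le_csSup hSbdd hlamS) (not_le.2 hlt)
  obtain ⟨x', hx', hRxx'⟩ := hR ν ⟨hν0, hν1⟩ x hνx hne
  exact ⟨ν, ⟨hν0, hν1⟩, x', hx', hRxx'⟩

lemma reach_lex (R : X → X → Prop)
    (hR : ∀ lam ∈ Set.Ioo (0 : ℝ) 1, ∀ x ∈ XlamSet f₁ f₂ lam,
      (Xlt f₁ x ∩ XlamSet f₁ f₂ lam).Nonempty →
        ∃ x' ∈ Xlt f₁ x ∩ XlamSet f₁ f₂ lam, R x x')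
    {x₀ : X} (h₀ : LexOpt12 f₁ f₂ x₀) {lam₁ : ℝ} (hlam₁ : lam₁ ∈ Set.Ioo (0:ℝ) 1)
    (hstrict : ∀ lam ∈ Set.Ico lam₁ 1, ∀ z, ¬ LexOpt12 f₁ f₂ z →
      wsum f₁ f₂ lam x₀ < wsum f₁ f₂ lam z) :
    ∀ n (x : X), (Finset.univ.filter fun z => f₁ z < f₁ x).card ≤ n →
      ∀ μ ∈ Set.Ioo (0:ℝ) 1, x ∈ XlamSet f₁ f₂ μ →
      ∃ y, LexOpt12 f₁ f₂ y ∧ Relation.ReflTransGen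
        (fun u v => SuppEff f₁ f₂ u ∧ SuppEff f₁ f₂ v ∧ (R u v ∨ R v u)) x y := by
  have hlex_of : ∀ lam ∈ Set.Ico lam₁ 1, ∀ x ∈ XlamSet f₁ f₂ lam, LexOpt12 f₁ f₂ x := by
    intro lam hl x hx
    by_contra h
    exact absurd (hx x₀) (not_le.2 (hstrict lam hl x h))
  intro n
  induction n with
  | zero =>
    intro x hcard μ hμ hxμ
    by_cases hxL : LexOpt12 f₁ f₂ x
    · exact ⟨x, hxL, Relation.ReflTransGen.refl⟩
    · exfalso
      obtain ⟨ν, hν, x', hx', -⟩ := step_lemma R hR h₀ hlam₁ hstrict hxL hμ hxμ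
      have : x' ∈ Finset.univ.filter fun z => f₁ z < f₁ x := by
        simp only [Finset.mem_filter, Finset.mem_univ, true_and]
        exact hx'.1
      have := Finset.card_pos.2 ⟨x', this⟩
      omega
  | succ n ih =>
    intro x hcard μ hμ hxμ
    by_cases hxL : LexOpt12 f₁ f₂ x
    · exact ⟨x, hxL, Relation.ReflTransGen.refl⟩
    · obtain ⟨ν, hν, x', hx', hRxx'⟩ := step_lemma R hR h₀ hlam₁ hstrict hxL hμ hxμ
      have hlt : f₁ x' < f₁ x := hx'.1
      have hsub : (Finset.univ.filter fun z => f₁ z < f₁ x') ⊂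
          (Finset.univ.filter fun z => f₁ z < f₁ x) := by
        constructor
        · intro z hz
          simp only [Finset.mem_filter, Finset.mem_univ, true_and] at *
          linarith
        · intro hcontra
          have : x' ∈ Finset.univ.filter fun z => f₁ z < f₁ x := by
            simp only [Finset.mem_filter, Finset.mem_univ, true_and]; exact hlt
          have := hcontra this
          simp only [Finset.mem_filter, Finset.mem_univ, true_and] at this
          exact lt_irrefl _ this
      have hcard' : (Finset.univ.filter fun z => f₁ z < f₁ x').card ≤ n := by
        have := Finset.card_lt_card hsub
        omega
      obtain ⟨y, hy, hpath⟩ := ih x' hcard' ν hν hx'.2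
      refine ⟨y, hy, Relation.ReflTransGen.head ⟨⟨μ, hμ, hxμ⟩, ⟨ν, hν, hx'.2⟩, Or.inl hRxx'⟩ hpath⟩

end Aux

/-- If the adjacency relation `R` satisfies the sufficient condition (for
every `λ ∈ (0,1)` and `x ∈ X_λ`, the set `X^<(x) ∩ X_λ`, if nonempty, contains a successor
of `x`) and the lexicographically `(f₁,f₂)`-optimal solutions induce a weakly connected
subgraph of `D_R`, then the supported efficient solutions induce a weakly connected subgraph
of `D_R`. -/
theorem supported_efficient_weakly_connected
    {X : Type*} [Fintype X] [Nonempty X] (f₁ f₂ : X → ℝ) (R : X → X → Prop)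
    (hR : ∀ lam ∈ Set.Ioo (0 : ℝ) 1, ∀ x ∈ XlamSet f₁ f₂ lam,
      (Xlt f₁ x ∩ XlamSet f₁ f₂ lam).Nonempty →
        ∃ x' ∈ Xlt f₁ x ∩ XlamSet f₁ f₂ lam, R x x')
    (hlex : ConnOn (fun a b => R a b ∨ R b a) {x | LexOpt12 f₁ f₂ x}) :
    ConnOn (fun a b => R a b ∨ R b a) {x | SuppEff f₁ f₂ x} := by
  intro a ha b hb
  obtain ⟨x₀, hx₀⟩ := lexopt_exists f₁ f₂
  obtain ⟨lam₁, hlam₁, hstrict⟩ := exists_lam1 hx₀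
  have hLsub : ∀ z, LexOpt12 f₁ f₂ z → z ∈ XlamSet f₁ f₂ lam₁ := by
    intro z hz w
    have hz' : wsum f₁ f₂ lam₁ z = wsum f₁ f₂ lam₁ x₀ := by
      obtain ⟨h1, h2⟩ := lex_vals hx₀ hz; unfold wsum; rw [h1, h2]
    rw [hz']
    by_cases hw : LexOpt12 f₁ f₂ w
    · obtain ⟨h1, h2⟩ := lex_vals hx₀ hw; unfold wsum; rw [h1, h2]
    · exact (hstrict lam₁ ⟨le_refl _, hlam₁.2⟩ w hw).le
  have hLSE : ∀ z, LexOpt12 f₁ f₂ z → SuppEff f₁ f₂ z :=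
    fun z hz => ⟨lam₁, hlam₁, hLsub z hz⟩
  simp only [Set.mem_setOf_eq] at ha hb
  obtain ⟨μa, hμa, hxa⟩ := ha
  obtain ⟨μb, hμb, hxb⟩ := hb
  obtain ⟨ya, hya, hpa⟩ := reach_lex R hR hx₀ hlam₁ hstrict _ a le_rfl μa hμa hxa
  obtain ⟨yb, hyb, hpb⟩ := reach_lex R hR hx₀ hlam₁ hstrict _ b le_rfl μb hμb hxb
  have hmid : Relation.ReflTransGen
      (fun u v => SuppEff f₁ f₂ u ∧ SuppEff f₁ f₂ v ∧ (R u v ∨ R v u)) ya yb :=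
    Relation.ReflTransGen.mono (fun u v huv => ⟨hLSE u huv.1, hLSE v huv.2.1, huv.2.2⟩) _ _ (hlex ya hya yb hyb)
  have hsym : Symmetric (fun u v => SuppEff f₁ f₂ u ∧ SuppEff f₁ f₂ v ∧ (R u v ∨ R v u)) :=
    fun u v h => ⟨h.2.1, h.1, h.2.2.symm⟩
  have hpb' := (@Relation.ReflTransGen.stdSymm _ _ ⟨hsym⟩).symm _ _ hpb
  exact (hpa.trans hmid).trans hpb'
end
end

section
/- Let M be a matroid on a finite ground set E with bi-objective costs c = (c₁,c₂) : E → ℝ², let λ ∈ [0,1], and let B be a λ-optimal basis of M. If there exists a λ-optimal basis B' with f₁(B') < f₁(B), then there exists a λ-optimal basis B'' with f₁(B'') < f₁(B) and |B \ B''| = 1, i.e., B'' is obtained from B by exchanging a single element. -/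
open Set

noncomputable section

/-- The weighted cost `c_λ(e) = λ·c₁(e) + (1−λ)·c₂(e)`. -/
def clam {α : Type*} (c₁ c₂ : α → ℝ) (lam : ℝ) (e : α) : ℝ :=
  lam * c₁ e + (1 - lam) * c₂ e

/-- The total cost `f(B) = Σ_{e∈B} c(e)` of a set of elements. -/
def setCost {α : Type*} (c : α → ℝ) (B : Set α) : ℝ := ∑ᶠ e ∈ B, c e

/-- `B` is a `λ`-optimal basis of `M`: a basis minimizing `Σ_{e∈B} c_λ(e)` among all bases. -/
def OptBasis {α : Type*} (M : Matroid α) (c₁ c₂ : α → ℝ) (lam : ℝ) (B : Set α) : Prop :=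
  M.IsBase B ∧ ∀ B' : Set α, M.IsBase B' →
    setCost (clam c₁ c₂ lam) B ≤ setCost (clam c₁ c₂ lam) B'

/-- `B` is a supported efficient basis: `λ`-optimal for some `λ ∈ (0,1)`. -/
def SuppEffBasis {α : Type*} (M : Matroid α) (c₁ c₂ : α → ℝ) (B : Set α) : Prop :=
  ∃ lam ∈ Set.Ioo (0 : ℝ) 1, OptBasis M c₁ c₂ lam B

/-- Cost of an exchanged set. -/
lemma setCost_exchange {α : Type*} [Fintype α] (c : α → ℝ) {B : Set α} {e f : α}
    (he : e ∈ B) (hf : f ∉ B) :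
    setCost c (insert f (B \ {e})) = setCost c B - c e + c f := by
  have hfin : (B \ {e}).Finite := Set.toFinite _
  have h1 : setCost c (insert f (B \ {e})) = c f + setCost c (B \ {e}) :=
    finsum_mem_insert c (by simp [hf]) hfin
  have h2 : setCost c B = c e + setCost c (B \ {e}) := by
    have : B = insert e (B \ {e}) := by simp [Set.insert_diff_singleton, he]
    rw [show setCost c B = setCost c (insert e (B \ {e})) by rw [← this]]
    exact finsum_mem_insert c (by simp) hfin
  unfold setCost at *
  rw [h1, h2]; ring

/-- Symmetric basis exchange. -/
lemma Matroid.IsBase.symm_exchange {α : Type*} [Fintype α] {M : Matroid α} {B B' : Set α}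
    (hB : M.IsBase B) (hB' : M.IsBase B') {e : α} (he : e ∈ B \ B') :
    ∃ f ∈ B' \ B, M.IsBase (insert f (B \ {e})) ∧ M.IsBase (insert e (B' \ {f})) := by
  have heE : e ∈ M.E := hB.subset_ground he.1
  -- e is in the closure of B'
  have heB' : e ∈ M.closure B' := by rw [hB'.closure_eq]; exact heE
  -- pick a minimal C ⊆ B' with e ∈ closure C
  set S : Set (Set α) := {C | C ⊆ B' ∧ e ∈ M.closure C}
  have hSfin : S.Finite := Set.toFinite _
  have hSne : S.Nonempty := ⟨B', subset_rfl, heB'⟩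
  obtain ⟨C, hCS, hCmin⟩ : ∃ C ∈ S, ∀ C' ∈ S, id C' ≤ id C → id C = id C' := by
    obtain ⟨C, hCS, hCmin⟩ := hSfin.exists_minimalFor id S hSne
    exact ⟨C, hCS, fun C' hC' hle => le_antisymm (hCmin hC' hle) hle⟩
  simp only [id] at hCmin
  obtain ⟨hCB', heC⟩ := hCS
  -- K = closure of B \ {e}
  have heK : e ∉ M.closure (B \ {e}) := hB.indep.notMem_closure_diff_of_mem he.1
  -- some element of C is outside K
  have hCnotK : ¬ C ⊆ M.closure (B \ {e}) := by
    intro hsub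
    exact heK (by
      have := M.closure_subset_closure hsub
      rw [M.closure_closure] at this
      exact this heC)
  obtain ⟨f, hfC, hfK⟩ := not_subset.1 hCnotK
  have hfB' : f ∈ B' := hCB' hfC
  have hfB : f ∉ B := by
    intro hfB
    have hfe : f ≠ e := fun h => he.2 (h ▸ hfB')
    exact hfK (M.subset_closure (B \ {e}) (diff_subset.trans hB.subset_ground) ⟨hfB, hfe⟩)
  refine ⟨f, ⟨hfB', hfB⟩, ?_, ?_⟩
  · -- B - e + f is a base
    have hind : M.Indep (insert f (B \ {e})) := by
      rw [(hB.indep.diff {e}).insert_indep_iff]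
      exact Or.inl ⟨hB'.subset_ground hfB', hfK⟩
    exact hB.exchange_isBase_of_indep hfB hind
  · -- B' - f + e is a base: show e ∉ closure (B' \ {f})
    have hnot : e ∉ M.closure (B' \ {f}) := by
      intro hcl
      -- minimality: e ∉ closure (C \ {f})
      have hCf : e ∉ M.closure (C \ {f}) := by
        intro hmem
        have hsub : C \ {f} ⊆ C := diff_subset
        have h3 := hCmin (C \ {f}) ⟨hsub.trans hCB', hmem⟩ hsub
        rw [h3] at hfC
        exact hfC.2 rfl
      have heC' : e ∈ M.closure (insert f (C \ {f})) := by
        rwa [Set.insert_diff_singleton, Set.insert_eq_of_mem hfC]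
      have hf_cl : f ∈ M.closure (insert e (C \ {f})) :=
        Matroid.mem_closure_insert hCf heC'
      -- insert e (C \ {f}) ⊆ closure (B' \ {f})
      have hsub2 : insert e (C \ {f}) ⊆ M.closure (B' \ {f}) :=
        insert_subset hcl ((diff_subset_diff_left hCB').trans
          (M.subset_closure (B' \ {f}) (diff_subset.trans hB'.subset_ground)))
      have : f ∈ M.closure (B' \ {f}) := by
        have h2 := M.closure_subset_closure hsub2
        rw [M.closure_closure] at h2
        exact h2 hf_cl
      exact hB'.indep.notMem_closure_diff_of_mem hfB' this
    have hind : M.Indep (insert e (B' \ {f})) := by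
      rw [(hB'.indep.diff {f}).insert_indep_iff]
      exact Or.inl ⟨heE, hnot⟩
    exact hB'.exchange_isBase_of_indep he.2 hind

/-- Let `λ ∈ [0,1]` and `B` a `λ`-optimal basis.  If some `λ`-optimal basis
`B'` has `f₁(B') < f₁(B)`, then there is a `λ`-optimal basis `B''` with `f₁(B'') < f₁(B)`
obtained from `B` by exchanging a single element, i.e. `|B \ B''| = 1`. -/
theorem exists_adjacent_optimal_basis
    {α : Type*} [Fintype α] (M : Matroid α) (c₁ c₂ : α → ℝ)
    (lam : ℝ) (hlam : lam ∈ Set.Icc (0 : ℝ) 1)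
    (B B' : Set α) (hB : OptBasis M c₁ c₂ lam B) (hB' : OptBasis M c₁ c₂ lam B')
    (hlt : setCost c₁ B' < setCost c₁ B) :
    ∃ B'' : Set α, OptBasis M c₁ c₂ lam B'' ∧ setCost c₁ B'' < setCost c₁ B ∧
      (B \ B'').ncard = 1 := by
  set w := clam c₁ c₂ lam with hw
  suffices H : ∀ n : ℕ, ∀ B' : Set α, OptBasis M c₁ c₂ lam B' → setCost c₁ B' < setCost c₁ B →
      (B \ B').ncard = n → ∃ B'' : Set α, OptBasis M c₁ c₂ lam B'' ∧
        setCost c₁ B'' < setCost c₁ B ∧ (B \ B'').ncard = 1 by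
    exact H _ B' hB' hlt rfl
  intro n
  induction n using Nat.strong_induction_on with
  | _ n ih =>
    intro B' hB' hlt hn
    rcases Nat.eq_zero_or_pos n with hn0 | hnpos
    · -- B = B', contradiction
      subst hn0
      have hempty : B \ B' = ∅ := (Set.ncard_eq_zero (Set.toFinite _)).mp hn
      have hBB' : B = B' := hB.1.eq_of_subset_isBase hB'.1 (diff_eq_empty.mp hempty)
      rw [hBB'] at hlt; exact absurd hlt (lt_irrefl _)
    · -- exchange step
      have hne : (B \ B').Nonempty := by
        rw [Set.nonempty_iff_ne_empty]
        intro h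
        rw [h, Set.ncard_empty] at hn; omega
      obtain ⟨e, he⟩ := hne
      obtain ⟨f, hf, hb1, hb2⟩ := hB.1.symm_exchange hB'.1 he
      set B₁ := insert f (B \ {e}) with hB₁
      set B₂ := insert e (B' \ {f}) with hB₂
      have hc1 : setCost w B₁ = setCost w B - w e + w f := setCost_exchange w he.1 hf.2
      have hc2 : setCost w B₂ = setCost w B' - w f + w e := setCost_exchange w hf.1 he.2
      have hd1 : setCost c₁ B₁ = setCost c₁ B - c₁ e + c₁ f := setCost_exchange c₁ he.1 hf.2
      have hd2 : setCost c₁ B₂ = setCost c₁ B' - c₁ f + c₁ e := setCost_exchange c₁ hf.1 he.2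
      have hBB' : setCost w B = setCost w B' :=
        le_antisymm (hB.2 B' hB'.1) (hB'.2 B hB.1)
      have hle1 : setCost w B ≤ setCost w B₁ := hB.2 B₁ hb1
      have hle2 : setCost w B' ≤ setCost w B₂ := hB'.2 B₂ hb2
      have heq1 : setCost w B₁ = setCost w B := by linarith
      have heq2 : setCost w B₂ = setCost w B' := by linarith
      have hopt1 : OptBasis M c₁ c₂ lam B₁ :=
        ⟨hb1, fun X hX => heq1 ▸ hB.2 X hX⟩
      have hopt2 : OptBasis M c₁ c₂ lam B₂ :=
        ⟨hb2, fun X hX => heq2 ▸ hB'.2 X hX⟩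
      by_cases hcase : setCost c₁ B₁ < setCost c₁ B
      · -- B₁ is the adjacent basis
        refine ⟨B₁, hopt1, hcase, ?_⟩
        have hef : e ≠ f := fun h => hf.2 (h ▸ he.1)
        have hset : B \ B₁ = {e} := by
          ext x
          constructor
          · rintro ⟨hxB, hxn⟩
            rw [Set.mem_singleton_iff]
            by_contra hxe
            exact hxn (Set.mem_insert_iff.mpr
              (Or.inr ⟨hxB, fun h => hxe (Set.mem_singleton_iff.mp h)⟩))
          · intro hx
            rw [Set.mem_singleton_iff] at hx; subst hx
            refine ⟨he.1, fun hmem => ?_⟩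
            rcases Set.mem_insert_iff.mp hmem with h | h
            · exact hef h
            · exact h.2 rfl
        rw [hset, Set.ncard_singleton]
      · -- recurse with B₂, which is strictly closer to B
        push_neg at hcase
        have hlt2 : setCost c₁ B₂ < setCost c₁ B := by linarith
        have hset : B \ B₂ = (B \ B') \ {e} := by
          ext x
          constructor
          · rintro ⟨hxB, hxn⟩
            have hxe : x ≠ e := fun h => hxn (h ▸ Set.mem_insert _ _)
            have hxB' : x ∉ B' := fun hxB' => hxn (Set.mem_insert_iff.mpr
              (Or.inr ⟨hxB', fun hxf => hf.2 ((Set.mem_singleton_iff.mp hxf) ▸ hxB)⟩))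
            exact ⟨⟨hxB, hxB'⟩, fun h => hxe (Set.mem_singleton_iff.mp h)⟩
          · rintro ⟨⟨hxB, hxB'⟩, hxe⟩
            refine ⟨hxB, fun hmem => ?_⟩
            rcases Set.mem_insert_iff.mp hmem with h | h
            · exact hxe (Set.mem_singleton_iff.mpr h)
            · exact hxB' h.1
        have hcard : (B \ B₂).ncard = n - 1 := by
          rw [hset, Set.ncard_diff_singleton_of_mem he, hn]
        exact ih (n - 1) (by omega) B₂ hopt2 hlt2 hcard
end
end

section
/- Let M be a matroid on a finite ground set E with m = |E| and bi-objective costs c = (c₁,c₂) : E → ℝ². Let B⁰, B¹, …, B^l be a sequence of bases such that B⁰ is lexicographically optimal with respect to (f₂,f₁), and for each k ∈ {1,…,l}, N^<(B^{k−1}) ≠ ∅ and B^k maximizes the slope s(B', B^{k−1}) over all bases B' ∈ N^<(B^{k−1}). Then l ≤ m², i.e., the sequence has length at most m² + 1. -/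
open Set

noncomputable section

/-- The slope `s(B',B)` between the images of the bases `B'` and `B`. -/
def basisSlope {α : Type*} (c₁ c₂ : α → ℝ) (B' B : Set α) : ℝ :=
  (setCost c₂ B' - setCost c₂ B) / (setCost c₁ B' - setCost c₁ B)

/-- `N^<(B)`: the bases adjacent to `B` (differing from `B` in exactly one element) with
strictly smaller first objective value. -/
def NltBasis {α : Type*} (M : Matroid α) (c₁ : α → ℝ) (B : Set α) : Set (Set α) :=
  {B' | M.IsBase B' ∧ (B \ B').ncard = 1 ∧ setCost c₁ B' < setCost c₁ B}

/-- `B` is a lexicographically optimal basis with respect to `(f₂, f₁)`. -/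
def LexOptBasis21 {α : Type*} (M : Matroid α) (c₁ c₂ : α → ℝ) (B : Set α) : Prop :=
  M.IsBase B ∧ (∀ B' : Set α, M.IsBase B' → setCost c₂ B ≤ setCost c₂ B') ∧
    ∀ B' : Set α, M.IsBase B' → setCost c₂ B' = setCost c₂ B →
      setCost c₁ B ≤ setCost c₁ B'

/-- potential -/
def phiPot {α : Type*} (M : Matroid α) (c₁ : α → ℝ) (B : Set α) : ℕ :=
  ∑ᶠ e ∈ B, (M.E ∩ {x | c₁ x < c₁ e}).ncard

section aux
variable {α : Type*} [Fintype α]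

lemma setCost_union_singleton (c : α → ℝ) {s : Set α} {a : α} (ha : a ∉ s) :
    setCost c (s ∪ {a}) = setCost c s + c a := by
  rw [setCost, finsum_mem_union (by simpa using ha) s.toFinite (Set.finite_singleton a),
    finsum_mem_singleton]
  rfl

lemma phiPot_union_singleton (M : Matroid α) (c : α → ℝ) {s : Set α} {a : α} (ha : a ∉ s) :
    phiPot M c (s ∪ {a}) = phiPot M c s + (M.E ∩ {x | c x < c a}).ncard := by
  rw [phiPot, finsum_mem_union (by simpa using ha) s.toFinite (Set.finite_singleton a),
    finsum_mem_singleton]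
  rfl

lemma phiPot_lt {M : Matroid α} {c₁ : α → ℝ} {Bp Bn : Set α} (hBp : M.IsBase Bp)
    (h : Bn ∈ NltBasis M c₁ Bp) : phiPot M c₁ Bn < phiPot M c₁ Bp := by
  obtain ⟨hBn, hcard, hcost⟩ := h
  obtain ⟨e, he⟩ := Set.ncard_eq_one.mp hcard
  have hcard' : (Bn \ Bp).ncard = 1 := by rw [hBn.ncard_diff_comm hBp, hcard]
  obtain ⟨g, hg⟩ := Set.ncard_eq_one.mp hcard'
  have heBp : e ∈ Bp := (he ▸ (Set.mem_singleton e) : e ∈ Bp \ Bn).1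
  have heBn : e ∉ Bn := (he ▸ (Set.mem_singleton e) : e ∈ Bp \ Bn).2
  have hgBn : g ∈ Bn := (hg ▸ (Set.mem_singleton g) : g ∈ Bn \ Bp).1
  have hgBp : g ∉ Bp := (hg ▸ (Set.mem_singleton g) : g ∈ Bn \ Bp).2
  have hBpeq : Bp = (Bp ∩ Bn) ∪ {e} := by rw [← he, Set.inter_union_diff]
  have hBneq : Bn = (Bp ∩ Bn) ∪ {g} := by rw [Set.inter_comm, ← hg, Set.inter_union_diff]
  have heS : e ∉ Bp ∩ Bn := fun h => heBn h.2
  have hgS : g ∉ Bp ∩ Bn := fun h => hgBp h.1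
  have hc : c₁ g < c₁ e := by
    have h1 : setCost c₁ Bp = setCost c₁ (Bp ∩ Bn) + c₁ e := by
      rw [← setCost_union_singleton c₁ heS, ← hBpeq]
    have h2 : setCost c₁ Bn = setCost c₁ (Bp ∩ Bn) + c₁ g := by
      rw [← setCost_union_singleton c₁ hgS, ← hBneq]
    rw [h1, h2] at hcost; linarith
  have hrank : (M.E ∩ {x | c₁ x < c₁ g}).ncard < (M.E ∩ {x | c₁ x < c₁ e}).ncard := by
    apply Set.ncard_lt_ncard
    · constructor
      · exact Set.inter_subset_inter_right _ (fun x hx => lt_trans hx hc)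
      · intro hsub
        have : g ∈ M.E ∩ {x | c₁ x < c₁ e} := ⟨hBn.subset_ground hgBn, hc⟩
        exact lt_irrefl (c₁ g) (hsub this).2
    · exact Set.toFinite _
  calc phiPot M c₁ Bn = phiPot M c₁ (Bp ∩ Bn) + (M.E ∩ {x | c₁ x < c₁ g}).ncard := by
        rw [← phiPot_union_singleton M c₁ hgS, ← hBneq]
    _ < phiPot M c₁ (Bp ∩ Bn) + (M.E ∩ {x | c₁ x < c₁ e}).ncard := by omega
    _ = phiPot M c₁ Bp := by rw [← phiPot_union_singleton M c₁ heS, ← hBpeq]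

lemma phiPot_le (M : Matroid α) (c₁ : α → ℝ) {Bset : Set α} (hB : Bset ⊆ M.E) :
    phiPot M c₁ Bset ≤ M.E.ncard ^ 2 := by
  have hf : Bset.Finite := Set.toFinite _
  rw [phiPot, ← hf.coe_toFinset, finsum_mem_coe_finset]
  calc ∑ e ∈ hf.toFinset, (M.E ∩ {x | c₁ x < c₁ e}).ncard
      ≤ hf.toFinset.card * M.E.ncard := by
        rw [Finset.card_eq_sum_ones, Finset.sum_mul, one_mul]
        apply Finset.sum_le_sum
        intro i _
        exact Set.ncard_le_ncard Set.inter_subset_left (Set.toFinite _)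
    _ ≤ M.E.ncard * M.E.ncard := by
        apply Nat.mul_le_mul_right
        rw [← Set.ncard_coe_finset, hf.coe_toFinset]
        exact Set.ncard_le_ncard hB (Set.toFinite _)
    _ = M.E.ncard ^ 2 := (sq _).symm

end aux

/-- If `B⁰` is lexicographically optimal w.r.t. `(f₂,f₁)` and each `B^k`
(`1 ≤ k ≤ l`) maximizes the slope `s(·, B^{k−1})` over `N^<(B^{k−1}) ≠ ∅`, then `l ≤ m²`,
where `m = |E|` is the size of the ground set. -/

theorem adjacency_algorithm_iteration_bound
    {α : Type*} [Fintype α] (M : Matroid α) (c₁ c₂ : α → ℝ)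
    (l : ℕ) (B : ℕ → Set α)
    (h0 : LexOptBasis21 M c₁ c₂ (B 0))
    (hstep : ∀ k, 1 ≤ k → k ≤ l →
      B k ∈ NltBasis M c₁ (B (k - 1)) ∧
        ∀ B' ∈ NltBasis M c₁ (B (k - 1)),
          basisSlope c₁ c₂ B' (B (k - 1)) ≤ basisSlope c₁ c₂ (B k) (B (k - 1))) :
    l ≤ M.E.ncard ^ 2 := by
  have key : ∀ k, k ≤ l → M.IsBase (B k) ∧ k + phiPot M c₁ (B k) ≤ phiPot M c₁ (B 0) := by
    intro k
    induction k with
    | zero => exact fun _ => ⟨h0.1, by omega⟩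
    | succ n ih =>
      intro hn
      obtain ⟨hbase, hle⟩ := ih (by omega)
      obtain ⟨hmem, -⟩ := hstep (n + 1) (by omega) hn
      simp only [Nat.add_sub_cancel] at hmem
      have hlt := phiPot_lt hbase hmem
      exact ⟨hmem.1, by omega⟩
  obtain ⟨hbase, hle⟩ := key l le_rfl
  have := phiPot_le M c₁ h0.1.subset_ground
  omega
end
end

section
/- Let λ¹ < λ² < … < λ^s be the elements of the set 𝓔 = {λ(e,f) : (e,f) ∈ 𝓟} of intersection values, and set λ⁰ = 0. Then for every k ∈ {1,…,s}, the ordering S^↑_{λ^{k−1}} equals the ordering S^↓_{λ^k}; equivalently, for all elements e, f ∈ E, e precedes f in S^↑_{λ^{k−1}} if and only if e precedes f in S^↓_{λ^k}. -/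
open Set

noncomputable section

/-- The set `𝓟` of pairs `(e,f)` with `c₁(e) > c₁(f)` and `c₂(e) < c₂(f)`. -/
def Pset {α : Type*} (c₁ c₂ : α → ℝ) : Set (α × α) :=
  {p | c₁ p.2 < c₁ p.1 ∧ c₂ p.1 < c₂ p.2}

/-- The set `𝓔 = {λ(e,f) : (e,f) ∈ 𝓟}` of intersection values: for `(e,f) ∈ 𝓟`, `λ(e,f)` is
the unique `t ∈ (0,1)` with `c_t(e) = c_t(f)`. -/
def crossSet {α : Type*} (c₁ c₂ : α → ℝ) : Set ℝ :=
  {t | t ∈ Set.Ioo (0 : ℝ) 1 ∧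
    ∃ p ∈ Pset c₁ c₂, clam c₁ c₂ t p.1 = clam c₁ c₂ t p.2}

/-- `e` strictly precedes `f` in the ordering `S^↑_λ`, i.e. in the non-descending
lexicographic order by the key `(c_λ(e), c₁(e))` with remaining ties broken by the fixed
linear order on the ground set. -/
def precUp {α : Type*} [LinearOrder α] (c₁ c₂ : α → ℝ) (lam : ℝ) (e f : α) : Prop :=
  clam c₁ c₂ lam e < clam c₁ c₂ lam f ∨
    (clam c₁ c₂ lam e = clam c₁ c₂ lam f ∧
      (c₁ e < c₁ f ∨ (c₁ e = c₁ f ∧ e < f)))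

/-- `e` strictly precedes `f` in the ordering `S^↓_λ`, i.e. in the non-descending
lexicographic order by the key `(c_λ(e), −c₁(e))` with remaining ties broken by the fixed
linear order on the ground set. -/
def precDown {α : Type*} [LinearOrder α] (c₁ c₂ : α → ℝ) (lam : ℝ) (e f : α) : Prop :=
  clam c₁ c₂ lam e < clam c₁ c₂ lam f ∨
    (clam c₁ c₂ lam e = clam c₁ c₂ lam f ∧
      (c₁ f < c₁ e ∨ (c₁ e = c₁ f ∧ e < f)))

/-!
For fixed `e, f` the difference `c_t(e) - c_t(f)` is affine in `t`; if it vanishes at some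
`s < 1`, it equals `(t - s) / (1 - s) · (c₁(e) - c₁(f))`. So at a tie the `c₁`-tie-break of `S^↑`
says on which side `e` lies just after `s`, and that of `S^↓` on which side it lies just before.
A strict sign change of the difference on `[μ, ν]` would, by the intermediate value theorem,
give an intersection value strictly between `μ` and `ν`; hence a strict comparison at either
end persists to the other end at least as a tie, which is resolved by the tie-break there.
-/

section
variable {α : Type*} {c₁ c₂ : α → ℝ} {e f : α} {s t : ℝ}

theorem one_sub_mul_clam_sub_clam (hs : clam c₁ c₂ s e = clam c₁ c₂ s f) :
    (1 - s) * (clam c₁ c₂ t e - clam c₁ c₂ t f) = (t - s) * (c₁ e - c₁ f) := by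
  simp only [clam] at hs ⊢
  linear_combination (1 - t) * hs

theorem clam_lt_clam_iff_of_clam_eq_of_lt (hs : clam c₁ c₂ s e = clam c₁ c₂ s f)
    (hs1 : s < 1) (hst : s < t) : clam c₁ c₂ t e < clam c₁ c₂ t f ↔ c₁ e < c₁ f := by
  have key := one_sub_mul_clam_sub_clam (t := t) hs
  constructor <;> intro h <;> nlinarith

theorem clam_lt_clam_iff_of_clam_eq_of_gt (hs : clam c₁ c₂ s e = clam c₁ c₂ s f)
    (hs1 : s < 1) (hts : t < s) : clam c₁ c₂ t e < clam c₁ c₂ t f ↔ c₁ f < c₁ e := by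
  have key := one_sub_mul_clam_sub_clam (t := t) hs
  constructor <;> intro h <;> nlinarith

theorem clam_eq_clam_of_clam_eq_of_c₁_eq (hs : clam c₁ c₂ s e = clam c₁ c₂ s f)
    (hs1 : s < 1) (h : c₁ e = c₁ f) : clam c₁ c₂ t e = clam c₁ c₂ t f := by
  have key := one_sub_mul_clam_sub_clam (t := t) hs
  rw [h, sub_self, mul_zero, mul_eq_zero] at key
  exact sub_eq_zero.mp (key.resolve_left (by linarith))

theorem exists_mem_crossSet_of_clam_lt_of_clam_gt {a b : ℝ} (ha : 0 ≤ a) (hb : b ≤ 1)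
    (hab : a < b) (h₁ : clam c₁ c₂ a e < clam c₁ c₂ a f)
    (h₂ : clam c₁ c₂ b f < clam c₁ c₂ b e) : ∃ t ∈ crossSet c₁ c₂, t ∈ Ioo a b := by
  have hcont : Continuous fun t => clam c₁ c₂ t e - clam c₁ c₂ t f := by
    simp only [clam]; fun_prop
  obtain ⟨t, hab_t, ht⟩ :=
    intermediate_value_Ioo hab.le hcont.continuousOn (⟨by linarith, by linarith⟩ :
      (0 : ℝ) ∈ Ioo (clam c₁ c₂ a e - clam c₁ c₂ a f) (clam c₁ c₂ b e - clam c₁ c₂ b f))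
  have htie : clam c₁ c₂ t e = clam c₁ c₂ t f := sub_eq_zero.mp ht
  have ht0 : 0 < t := ha.trans_lt hab_t.1
  have ht1 : t < 1 := hab_t.2.trans_le hb
  have hc₁ : c₁ f < c₁ e := (clam_lt_clam_iff_of_clam_eq_of_gt htie ht1 hab_t.1).mp h₁
  have hc₂ : c₂ e < c₂ f := by
    simp only [clam] at htie
    nlinarith
  exact ⟨t, ⟨⟨ht0, ht1⟩, (e, f), ⟨hc₁, hc₂⟩, htie⟩, hab_t⟩

theorem clam_le_clam_of_forall_not_mem_crossSet {a b : ℝ} (ha : 0 ≤ a) (hb : b ≤ 1)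
    (hab : a < b) (hgap : ∀ t ∈ crossSet c₁ c₂, ¬(a < t ∧ t < b))
    (h : clam c₁ c₂ a e < clam c₁ c₂ a f) : clam c₁ c₂ b e ≤ clam c₁ c₂ b f := by
  by_contra! h'
  obtain ⟨t, ht, hat⟩ := exists_mem_crossSet_of_clam_lt_of_clam_gt ha hb hab h h'
  exact hgap t ht hat

end

theorem up_ordering_eq_next_down_ordering_general
    {α : Type*} [LinearOrder α] (c₁ c₂ : α → ℝ)
    (μ ν : ℝ) (hμ : μ ∈ insert (0 : ℝ) (crossSet c₁ c₂)) (hν : ν ∈ crossSet c₁ c₂)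
    (hlt : μ < ν) (hconsec : ∀ t ∈ crossSet c₁ c₂, ¬(μ < t ∧ t < ν)) :
    ∀ e f : α, precUp c₁ c₂ μ e f ↔ precDown c₁ c₂ ν e f := by
  have hμ0 : 0 ≤ μ := by
    rcases mem_insert_iff.mp hμ with rfl | h
    exacts [le_rfl, h.1.1.le]
  have hν1 : ν < 1 := hν.1.2
  have hμ1 : μ < 1 := hlt.trans hν1
  have no_cross {e f : α} (h : clam c₁ c₂ μ e < clam c₁ c₂ μ f) :
      clam c₁ c₂ ν e ≤ clam c₁ c₂ ν f :=
    clam_le_clam_of_forall_not_mem_crossSet hμ0 hν1.le hlt hconsec h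
  intro e f
  constructor
  · rintro (h | ⟨htie, hc | ⟨hc, hef⟩⟩)
    · rcases (no_cross h).lt_or_eq with h' | h'
      · exact .inl h'
      · exact .inr ⟨h', .inl ((clam_lt_clam_iff_of_clam_eq_of_gt h' hν1 hlt).mp h)⟩
    · exact .inl ((clam_lt_clam_iff_of_clam_eq_of_lt htie hμ1 hlt).mpr hc)
    · exact .inr ⟨clam_eq_clam_of_clam_eq_of_c₁_eq htie hμ1 hc, .inr ⟨hc, hef⟩⟩
  · rintro (h | ⟨htie, hc | ⟨hc, hef⟩⟩)
    · rcases (not_lt.mp fun h' => (no_cross h').not_gt h).lt_or_eq with h' | h'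
      · exact .inl h'
      · exact .inr ⟨h', .inl ((clam_lt_clam_iff_of_clam_eq_of_lt h' hμ1 hlt).mp h)⟩
    · exact .inl ((clam_lt_clam_iff_of_clam_eq_of_gt htie hν1 hlt).mpr hc)
    · exact .inr ⟨clam_eq_clam_of_clam_eq_of_c₁_eq htie hν1 hc, .inr ⟨hc, hef⟩⟩

/-- Let `μ ∈ 𝓔 ∪ {0}` and `ν ∈ 𝓔` be consecutive intersection values
(`μ < ν` with no element of `𝓔` strictly in between).  Then the ordering `S^↑_μ` equals the
ordering `S^↓_ν`: for all `e, f`, `e` precedes `f` in `S^↑_μ` iff `e` precedes `f` in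
`S^↓_ν`. -/
theorem up_ordering_eq_next_down_ordering
    {α : Type*} [Fintype α] [LinearOrder α] (c₁ c₂ : α → ℝ)
    (μ ν : ℝ) (hμ : μ ∈ insert (0 : ℝ) (crossSet c₁ c₂)) (hν : ν ∈ crossSet c₁ c₂)
    (hlt : μ < ν) (hconsec : ∀ t ∈ crossSet c₁ c₂, ¬(μ < t ∧ t < ν)) :
    ∀ e f : α, precUp c₁ c₂ μ e f ↔ precDown c₁ c₂ ν e f :=
  up_ordering_eq_next_down_ordering_general c₁ c₂ μ ν hμ hν hlt hconsec
end
end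

section
/- Let M be a matroid on a finite ground set E, let the list 𝓢 enumerate E without repetition, let e ∈ E, and let 𝓢̂ be the list 𝓢 with e removed. If e ∉ B_M(𝓢), then B_{M̂}(𝓢̂) = B_M(𝓢), where M̂ is the restriction of M to E − {e}. If e ∈ B_M(𝓢), then {e} ∪ B_{M̂}(𝓢̂) = B_M(𝓢), where M̂ is the contraction of M by {e}. -/
open Set

noncomputable section

open Classical in
/-- One step of the greedy algorithm: add `e` to the current set `I` if this keeps it
independent in `M`. -/
def greedyStep {α : Type*} (M : Matroid α) (I : Set α) (e : α) : Set α :=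
  if M.Indep (insert e I) then insert e I else I

/-- The greedy basis `B_M(𝓢)`: scan the list `𝓢` in order, starting from `∅`, adding each
element whose addition keeps the current set independent in `M`. -/
def greedy {α : Type*} (M : Matroid α) (S : List α) : Set α :=
  S.foldl (greedyStep M) ∅

lemma subset_greedyStep {α : Type*} (M : Matroid α) (I : Set α) (x : α) :
    I ⊆ greedyStep M I x := by
  unfold greedyStep; split <;> simp [Set.subset_insert]

lemma greedyStep_subset_insert {α : Type*} (M : Matroid α) (I : Set α) (x : α) :
    greedyStep M I x ⊆ insert x I := by
  unfold greedyStep; split <;> simp [Set.subset_insert]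

lemma subset_foldl {α : Type*} (M : Matroid α) :
    ∀ (L : List α) (I : Set α), I ⊆ L.foldl (greedyStep M) I := by
  intro L
  induction L with
  | nil => intro I; simp [List.foldl]
  | cons x L ih =>
    intro I
    exact (subset_greedyStep M I x).trans (ih _)

lemma foldl_subset_union {α : Type*} (M : Matroid α) :
    ∀ (L : List α) (I : Set α), L.foldl (greedyStep M) I ⊆ I ∪ {x | x ∈ L} := by
  intro L
  induction L with
  | nil => intro I; simp [List.foldl]
  | cons x L ih =>
    intro I
    refine (ih (greedyStep M I x)).trans ?_
    intro y hy
    rcases hy with hy | hy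
    · rcases greedyStep_subset_insert M I x hy with rfl | hy
      · exact Or.inr (by simp)
      · exact Or.inl hy
    · exact Or.inr (Set.mem_setOf.mpr (List.mem_cons_of_mem x hy))

/-- If inserting `e` into the final greedy fold keeps independence, then folding starting
from `insert e I` gives the same as inserting `e` after folding from `I`. -/
lemma foldl_insert_comm {α : Type*} (M : Matroid α) (e : α) :
    ∀ (L : List α) (I : Set α), M.Indep (insert e (L.foldl (greedyStep M) I)) →
      L.foldl (greedyStep M) (insert e I) = insert e (L.foldl (greedyStep M) I) := by
  intro L
  induction L with
  | nil => intro I _; simp [List.foldl]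
  | cons x L ih =>
    intro I hInd
    simp only [List.foldl] at hInd ⊢
    by_cases hx : M.Indep (insert x I)
    · have hstep : greedyStep M I x = insert x I := by simp [greedyStep, hx]
      rw [hstep] at hInd ⊢
      have hsub : insert x I ⊆ L.foldl (greedyStep M) (insert x I) := subset_foldl M L _
      have hxI : M.Indep (insert x (insert e I)) := by
        rw [Set.insert_comm]
        exact hInd.subset (Set.insert_subset_insert hsub)
      have hstep2 : greedyStep M (insert e I) x = insert e (insert x I) := by
        unfold greedyStep
        rw [if_pos hxI, Set.insert_comm]
      rw [hstep2]
      exact ih _ hInd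
    · have hstep : greedyStep M I x = I := by simp [greedyStep, hx]
      rw [hstep] at hInd ⊢
      have hxI : ¬ M.Indep (insert x (insert e I)) := fun h =>
        hx (h.subset (by intro y hy; rcases hy with rfl | hy; · simp
                         · exact Set.mem_insert_of_mem _ (Set.mem_insert_of_mem _ hy)))
      have hstep2 : greedyStep M (insert e I) x = insert e I := by
        simp [greedyStep]
        intro h
        exact absurd h hxI
      rw [hstep2]
      exact ih _ hInd

/-- Folding the restriction matroid agrees with folding `M` when all elements stay in
`M.E \ {e}`. -/
lemma foldl_restrict {α : Type*} (M : Matroid α) (e : α) :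
    ∀ (L : List α) (I : Set α), (∀ x ∈ L, x ∈ M.E \ {e}) → I ⊆ M.E \ {e} →
      L.foldl (greedyStep (M.restrict (M.E \ {e}))) I = L.foldl (greedyStep M) I := by
  intro L
  induction L with
  | nil => intro I _ _; simp [List.foldl]
  | cons x L ih =>
    intro I hL hI
    simp only [List.foldl]
    have hx : x ∈ M.E \ {e} := hL x (by simp)
    have hins : insert x I ⊆ M.E \ {e} := Set.insert_subset hx hI
    have hstep : greedyStep (M.restrict (M.E \ {e})) I x = greedyStep M I x := by
      have hiff : (M.restrict (M.E \ {e})).Indep (insert x I) ↔ M.Indep (insert x I) := by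
        rw [Matroid.restrict_indep_iff]
        exact ⟨fun h => h.1, fun h => ⟨h, hins⟩⟩
      unfold greedyStep
      by_cases h : M.Indep (insert x I)
      · rw [if_pos (hiff.mpr h), if_pos h]
      · rw [if_neg (fun hh => h (hiff.mp hh)), if_neg h]
    rw [hstep]
    have : greedyStep M I x ⊆ M.E \ {e} :=
      (greedyStep_subset_insert M I x).trans hins
    exact ih _ (fun y hy => hL y (by simp [hy])) this

/-- The contraction correspondence. -/
lemma foldl_contract {α : Type*} (M M' : Matroid α) (e : α)
    (hI' : ∀ I : Set α, M'.Indep I ↔ I ⊆ M.E \ {e} ∧ M.Indep (insert e I)) :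
    ∀ (L : List α) (I : Set α), (∀ x ∈ L, x ∈ M.E \ {e}) → I ⊆ M.E \ {e} →
      insert e (L.foldl (greedyStep M') I) = L.foldl (greedyStep M) (insert e I) := by
  intro L
  induction L with
  | nil => intro I _ _; simp [List.foldl]
  | cons x L ih =>
    intro I hL hI
    simp only [List.foldl]
    have hx : x ∈ M.E \ {e} := hL x (by simp)
    have hins : insert x I ⊆ M.E \ {e} := Set.insert_subset hx hI
    have heq : M'.Indep (insert x I) ↔ M.Indep (insert x (insert e I)) := by
      rw [hI' (insert x I), Set.insert_comm]
      exact ⟨fun h => h.2, fun h => ⟨hins, h⟩⟩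
    by_cases h : M'.Indep (insert x I)
    · have hstep : greedyStep M' I x = insert x I := by simp [greedyStep, h]
      have hstep2 : greedyStep M (insert e I) x = insert x (insert e I) := by
        simp [greedyStep, heq.mp h]
      rw [hstep, hstep2, Set.insert_comm x e I] at *
      exact ih _ (fun y hy => hL y (by simp [hy])) hins
    · have hstep : greedyStep M' I x = I := by simp [greedyStep, h]
      have hstep2 : greedyStep M (insert e I) x = insert e I := by
        simp only [greedyStep, if_neg (fun hh => h (heq.mpr hh))]
      rw [hstep, hstep2]
      exact ih _ (fun y hy => hL y (by simp [hy])) hI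

/-- Let `𝓢` enumerate the ground set of `M` without repetition, `e` an
element, and `𝓢̂` be `𝓢` with `e` removed.  If `e ∉ B_M(𝓢)` then the greedy basis of the
restriction of `M` to `E − {e}` (for the list `𝓢̂`) equals `B_M(𝓢)`; if `e ∈ B_M(𝓢)` then
`{e}` together with the greedy basis of the contraction of `M` by `{e}` (for the list `𝓢̂`)
equals `B_M(𝓢)`.  The contraction is characterized by its ground set `E \ {e}` and its
independent sets, the `I ⊆ E \ {e}` with `I ∪ {e}` independent in `M`. -/
theorem greedy_restrict_contract
    {α : Type*} [Fintype α] [DecidableEq α] (M : Matroid α)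
    (S : List α) (hnd : S.Nodup) (henum : ∀ x : α, x ∈ S ↔ x ∈ M.E)
    (e : α) (he : e ∈ M.E) :
    (e ∉ greedy M S → greedy (M.restrict (M.E \ {e})) (S.erase e) = greedy M S) ∧
    (e ∈ greedy M S →
      ∀ M' : Matroid α, M'.E = M.E \ {e} →
        (∀ I : Set α, M'.Indep I ↔ I ⊆ M.E \ {e} ∧ M.Indep (insert e I)) →
        insert e (greedy M' (S.erase e)) = greedy M S) := by
  have heS : e ∈ S := (henum e).mpr he
  obtain ⟨A, B, rfl⟩ := List.append_of_mem heS
  have heA : e ∉ A := by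
    have := hnd
    rw [List.nodup_append] at this
    exact fun h => this.2.2 e h e (by simp) rfl
  have heB : e ∉ B := by
    have := hnd
    rw [List.nodup_append] at this
    exact (List.nodup_cons.mp this.2.1).1
  have herase : (A ++ e :: B).erase e = A ++ B := by
    rw [List.erase_append_right _ heA, List.erase_cons_head]
  have hmem : ∀ x ∈ A ++ B, x ∈ M.E \ {e} := by
    intro x hx
    rcases List.mem_append.mp hx with hx | hx
    · refine ⟨(henum x).mp (by simp [hx]), ?_⟩
      rintro rfl; exact heA hx
    · refine ⟨(henum x).mp (by simp [hx]), ?_⟩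
      rintro rfl; exact heB hx
  set J : Set α := A.foldl (greedyStep M) ∅ with hJ
  have hfold : greedy M (A ++ e :: B) = B.foldl (greedyStep M) (greedyStep M J e) := by
    simp [greedy, List.foldl_append, List.foldl]
    rfl
  constructor
  · intro hne
    have hnotind : ¬ M.Indep (insert e J) := by
      intro h
      apply hne
      rw [hfold]
      have : greedyStep M J e = insert e J := by simp [greedyStep, h]
      rw [this]
      exact subset_foldl M B _ (Set.mem_insert e J)
    have hstep : greedyStep M J e = J := by simp [greedyStep, hnotind]
    rw [herase, hfold, hstep]
    have : greedy (M.restrict (M.E \ {e})) (A ++ B) = (A ++ B).foldl (greedyStep M) ∅ :=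
      foldl_restrict M e (A ++ B) ∅ hmem (Set.empty_subset _)
    rw [greedy] at *
    rw [this, List.foldl_append]
  · intro hemem M' hE' hI'
    have hind : M.Indep (insert e J) := by
      by_contra h
      have hstep : greedyStep M J e = J := by simp [greedyStep, h]
      rw [hfold, hstep] at hemem
      have := foldl_subset_union M B J hemem
      rcases this with h1 | h1
      · have := foldl_subset_union M A ∅ h1
        rcases this with h2 | h2
        · exact h2
        · exact heA h2
      · exact heB h1
    have hstep : greedyStep M J e = insert e J := by simp [greedyStep, hind]
    rw [herase, hfold, hstep]
    rw [greedy]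
    have h1 : insert e ((A ++ B).foldl (greedyStep M') ∅) =
        (A ++ B).foldl (greedyStep M) (insert e ∅) :=
      foldl_contract M M' e hI' (A ++ B) ∅ hmem (Set.empty_subset _)
    rw [h1, List.foldl_append]
    congr 1
    exact foldl_insert_comm M e A ∅ (by simpa [hJ] using hind)
end
end
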